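/- arXiv:2012.10946 — 8 statements merged into one kernel-verified Lean document; each statement's English description precedes it below -/
import Mathlib

section
/- Let f, h : ℝ² → ℝ be real-analytic functions such that every zero of h is a zero of f (i.e. h⁻¹({0}) ⊆ f⁻¹({0})). Suppose that for every point (x₀, y₀) ∈ ℝ² with h(x₀, y₀) = 0, the one-variable function y ↦ h(x₀, y) has a zero of order exactly one at y₀, i.e. h(x₀, y) = (y − y₀)·h̃(y) for some real-analytic h̃ with h̃(y₀) ≠ 0 (equivalently, ∂h/∂y(x₀, y₀) ≠ 0). Then there exists a real-analytic function g : ℝ² → ℝ such that f(x, y) = h(x, y)·g(x, y) for all (x, y) ∈ ℝ². -/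
/-!
Near a zero `z₀` of `h`, the map `Φ (x, y) = (x, h (x, y))` has invertible derivative because
`∂h/∂y (z₀) ≠ 0`, so it has an analytic local inverse `Ψ`. The function `f ∘ Ψ` vanishes on the
line `{w₂ = 0}`, and an analytic function vanishing there is `w₂` times an analytic function
(Hadamard's lemma, proved on the power series by telescoping each homogeneous term). Pulling back
along `Φ` gives `f = h * k` near `z₀` with `k` analytic. These local quotients glue: off the zero
set of `h` they equal `f / h`, and on it `(∂f/∂y) / (∂h/∂y)`.
-/

open Filter Topology

variable {𝕜 E F E' F' G : Type*} [NontriviallyNormedField 𝕜]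
  [NormedAddCommGroup E] [NormedSpace 𝕜 E] [NormedAddCommGroup F] [NormedSpace 𝕜 F]
  [NormedAddCommGroup E'] [NormedSpace 𝕜 E'] [NormedAddCommGroup F'] [NormedSpace 𝕜 F']
  [NormedAddCommGroup G] [NormedSpace 𝕜 G]

theorem FormalMultilinearSeries.radius_le_of_norm_le_succ_mul {p : FormalMultilinearSeries 𝕜 E F}
    {q : FormalMultilinearSeries 𝕜 E' F'} (h : ∀ n, ‖q n‖ ≤ (n + 1) * ‖p (n + 1)‖) :
    p.radius ≤ q.radius := by
  refine ENNReal.le_of_forall_nnreal_lt fun r hr => ?_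
  obtain ⟨r', hrr', hr'⟩ := ENNReal.lt_iff_exists_nnreal_btwn.mp hr
  obtain ⟨C, -, hC⟩ := p.norm_mul_pow_le_of_lt_radius hr'
  have hr'0 : (0 : ℝ) < r' := lt_of_le_of_lt r.2 (by exact_mod_cast hrr')
  have ha : ‖(r / r' : ℝ)‖ < 1 := by
    rw [Real.norm_of_nonneg (by positivity), div_lt_one hr'0]; exact_mod_cast hrr'
  refine q.le_radius_of_summable <| Summable.of_nonneg_of_le (fun n => by positivity)
    (fun n => ?_) (((summable_pow_mul_geometric_of_norm_lt_one 1 ha).add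
      (summable_geometric_of_norm_lt_one ha)).mul_left (C / r'))
  have hpn : ‖p (n + 1)‖ ≤ C / r' ^ (n + 1) := by
    rw [le_div_iff₀ (by positivity)]; exact hC (n + 1)
  calc ‖q n‖ * r ^ n ≤ (n + 1) * (C / r' ^ (n + 1)) * r ^ n := by
        gcongr; exact (h n).trans (by gcongr)
    _ = C / r' * ((n : ℝ) ^ 1 * (r / r') ^ n + (r / r') ^ n) := by
      rw [div_pow]; field_simp; ring

namespace ContinuousMultilinearMap

variable {n : ℕ}

/-- Telescoping `P (z, …, z) - P ((z.1, 0), …, (z.1, 0))` one slot at a time, the `i`-th difference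
has `z - (z.1, 0) = z.2 • (0, 1)` in slot `i`, `z` before it and `(z.1, 0)` after it. -/
noncomputable def sndSlope (P : ContinuousMultilinearMap 𝕜 (fun _ : Fin (n + 1) => E × 𝕜) G) :
    ContinuousMultilinearMap 𝕜 (fun _ : Fin n => E × 𝕜) G :=
  ∑ i : Fin (n + 1), (P.curryMid i (0, 1)).compContinuousLinearMap fun k =>
    if k.castSucc < i then .id 𝕜 (E × 𝕜) else (ContinuousLinearMap.inl 𝕜 E 𝕜).comp (.fst 𝕜 E 𝕜)

theorem norm_sndSlope_le (P : ContinuousMultilinearMap 𝕜 (fun _ : Fin (n + 1) => E × 𝕜) G) :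
    ‖P.sndSlope‖ ≤ (n + 1) * ‖P‖ := by
  have hL : ‖(ContinuousLinearMap.inl 𝕜 E 𝕜).comp (.fst 𝕜 E 𝕜)‖ ≤ 1 :=
    ContinuousLinearMap.opNorm_le_bound _ zero_le_one fun z => by simp [Prod.norm_def]
  have hterm : ∀ i : Fin (n + 1), ‖(P.curryMid i (0, 1)).compContinuousLinearMap fun k =>
      if k.castSucc < i then .id 𝕜 (E × 𝕜)
      else (ContinuousLinearMap.inl 𝕜 E 𝕜).comp (.fst 𝕜 E 𝕜)‖ ≤ ‖P‖ := by
    intro i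
    refine (norm_compContinuousLinearMap_le _ _).trans ?_
    refine (mul_le_of_le_one_right (norm_nonneg _)
      (Finset.prod_le_one (fun _ _ => norm_nonneg _) fun k _ => ?_)).trans ?_
    · split_ifs
      · exact ContinuousLinearMap.norm_id_le
      · exact hL
    · simpa using (P.curryMid i).le_opNorm ((0 : E), (1 : 𝕜))
  simpa [sndSlope] using norm_sum_le_of_le Finset.univ fun i _ => hterm i

theorem snd_smul_sndSlope_apply (P : ContinuousMultilinearMap 𝕜 (fun _ : Fin (n + 1) => E × 𝕜) G)
    (z : E × 𝕜) :
    z.2 • P.sndSlope (fun _ => z) = P (fun _ => z) - P (fun _ => (z.1, 0)) := by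
  have h := P.toMultilinearMap.map_sub_map_piecewise (fun _ => z) (fun _ => (z.1, 0)) Finset.univ
  simp only [Finset.piecewise_univ, Finset.mem_univ, true_implies, coe_coe] at h
  rw [h, sndSlope, sum_apply, Finset.smul_sum]
  refine Finset.sum_congr rfl fun i _ => ?_
  rw [compContinuousLinearMap_apply, ← smul_apply, ← map_smul, curryMid_apply]
  congr 1
  ext j : 1
  cases j using Fin.succAboveCases i with
  | x => simp [Prod.ext_iff]
  | p k =>
    simp only [Fin.insertNth_apply_succAbove, Fin.succAbove_lt_iff_castSucc_lt,
      (Fin.succAbove_ne i k).symm, if_false]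
    split_ifs <;> rfl

end ContinuousMultilinearMap

namespace FormalMultilinearSeries

noncomputable def sndSlope (p : FormalMultilinearSeries 𝕜 (E × 𝕜) G) :
    FormalMultilinearSeries 𝕜 (E × 𝕜) G :=
  fun n => (p (n + 1)).sndSlope

theorem radius_le_radius_sndSlope (p : FormalMultilinearSeries 𝕜 (E × 𝕜) G) :
    p.radius ≤ p.sndSlope.radius :=
  radius_le_of_norm_le_succ_mul fun n => (p (n + 1)).norm_sndSlope_le

end FormalMultilinearSeries

theorem AnalyticAt.exists_analyticAt_eventually_sub_eq_smul [CompleteSpace G] {F : E × 𝕜 → G}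
    {z₀ : E × 𝕜} (hF : AnalyticAt 𝕜 F z₀) :
    ∃ Q : E × 𝕜 → G, AnalyticAt 𝕜 Q z₀ ∧
      ∀ᶠ z in 𝓝 z₀, F z - F (z.1, z₀.2) = (z.2 - z₀.2) • Q z := by
  obtain ⟨p, r, hp⟩ := hF
  have hq : r ≤ p.sndSlope.radius := hp.r_le.trans p.radius_le_radius_sndSlope
  refine ⟨fun z => p.sndSlope.sum (z - z₀), ?_, ?_⟩
  · exact (p.sndSlope.hasFPowerSeriesOnBall (hp.r_pos.trans_le hq)).analyticAt.comp_of_eq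
      (analyticAt_id.sub analyticAt_const) (sub_self z₀)
  filter_upwards [Metric.eball_mem_nhds z₀ hp.r_pos] with z hz
  set δ := z - z₀
  have hδ : δ ∈ Metric.eball (0 : E × 𝕜) r := by
    rwa [Metric.mem_eball, edist_zero_right, ← edist_eq_enorm_sub]
  have hδ₁ : ((δ.1, 0) : E × 𝕜) ∈ Metric.eball (0 : E × 𝕜) r := by
    rw [Metric.mem_eball, edist_zero_right] at hδ ⊢
    refine lt_of_le_of_lt ?_ hδ
    rw [enorm_le_iff_norm_le]
    simp [Prod.norm_def]
  have hdiff := (hp.hasSum hδ).sub (hp.hasSum hδ₁)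
  rw [← hasSum_nat_add_iff' 1] at hdiff
  have hslope := (p.sndSlope.hasSum (Metric.eball_subset_eball hq hδ)).const_smul δ.2
  have hz' : z₀ + δ = z := add_sub_cancel z₀ z
  have hz₁ : z₀ + (δ.1, 0) = (z.1, z₀.2) := by ext <;> simp [δ]
  have h0 : (p 0 fun _ => δ) = p 0 fun _ => (δ.1, 0) := congrArg (p 0) (Subsingleton.elim _ _)
  rw [hz', hz₁, Finset.sum_range_one, h0, sub_self, sub_zero] at hdiff
  rw [show z.2 - z₀.2 = δ.2 from rfl]
  refine hdiff.unique ?_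
  simpa only [FormalMultilinearSeries.sndSlope, ContinuousMultilinearMap.snd_smul_sndSlope_apply]
    using hslope

theorem HasStrictFDerivAt.analyticAt_localInverse [CompleteSpace E] {f : E → F}
    {f' : E ≃L[𝕜] F} {a : E} (hf : HasStrictFDerivAt f (f' : E →L[𝕜] F) a)
    (ha : AnalyticAt 𝕜 f a) : AnalyticAt 𝕜 (hf.localInverse f f' a) (f a) := by
  have hR := hf.toOpenPartialHomeomorph_coe
  have := (hf.toOpenPartialHomeomorph f).analyticAt_symm' hf.mem_toOpenPartialHomeomorph_source
    (hR ▸ ha) (hR ▸ hf.hasFDerivAt.fderiv)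
  rwa [hR] at this

theorem HasStrictFDerivAt.exists_equiv_prodMk_fst {h : E × 𝕜 → 𝕜} {D : E × 𝕜 →L[𝕜] 𝕜}
    {z₀ : E × 𝕜} (hh : HasStrictFDerivAt h D z₀) (hD : D (0, 1) ≠ 0) :
    ∃ i : (E × 𝕜) ≃L[𝕜] E × 𝕜,
      HasStrictFDerivAt (fun z => (z.1, h z)) (i : E × 𝕜 →L[𝕜] E × 𝕜) z₀ := by
  refine ⟨(ContinuousLinearEquiv.refl 𝕜 E).skewProd
    (ContinuousLinearEquiv.unitsEquivAut 𝕜 (Units.mk0 _ hD)) (D.comp (.inl 𝕜 E 𝕜)), ?_⟩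
  have hv : ∀ v : E × 𝕜, v = ((v.1, 0) : E × 𝕜) + v.2 • ((0 : E), (1 : 𝕜)) := fun v => by
    ext <;> simp
  refine (hasStrictFDerivAt_fst.prodMk hh).congr_fderiv (ContinuousLinearMap.ext fun v => ?_)
  ext
  · rfl
  · simp only [ContinuousLinearEquiv.coe_coe, ContinuousLinearEquiv.skewProd_apply,
      ContinuousLinearEquiv.unitsEquivAut_apply, ContinuousLinearMap.coe_comp, Function.comp_apply,
      ContinuousLinearMap.inl_apply, Units.val_mk0, ContinuousLinearMap.prod_apply]
    conv_lhs => rw [hv v]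
    rw [map_add, map_smul, smul_eq_mul, add_comm]

theorem AnalyticAt.exists_analyticAt_leftInverse_prodMk_fst [CompleteSpace 𝕜] [CompleteSpace E]
    {h : E × 𝕜 → 𝕜} {z₀ : E × 𝕜} (hh : AnalyticAt 𝕜 h z₀) (hd : fderiv 𝕜 h z₀ (0, 1) ≠ 0) :
    ∃ Ψ : E × 𝕜 → E × 𝕜, AnalyticAt 𝕜 Ψ (z₀.1, h z₀) ∧ Ψ (z₀.1, h z₀) = z₀ ∧
      (∀ᶠ z in 𝓝 z₀, Ψ (z.1, h z) = z) ∧ ∀ᶠ w in 𝓝 (z₀.1, h z₀), h (Ψ w) = w.2 := by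
  obtain ⟨i, hΦ⟩ := hh.hasStrictFDerivAt.exists_equiv_prodMk_fst hd
  exact ⟨hΦ.localInverse _ _ _, hΦ.analyticAt_localInverse (analyticAt_fst.prod hh),
    hΦ.localInverse_apply_image, hΦ.eventually_left_inverse,
    hΦ.eventually_right_inverse.mono fun w hw => congrArg Prod.snd hw⟩

theorem AnalyticAt.exists_analyticAt_eventually_eq_smul [CompleteSpace 𝕜] [CompleteSpace E]
    [CompleteSpace G] {f : E × 𝕜 → G} {h : E × 𝕜 → 𝕜} {z₀ : E × 𝕜} (hf : AnalyticAt 𝕜 f z₀)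
    (hh : AnalyticAt 𝕜 h z₀) (hz₀ : h z₀ = 0) (hd : fderiv 𝕜 h z₀ (0, 1) ≠ 0)
    (hzero : ∀ᶠ z in 𝓝 z₀, h z = 0 → f z = 0) :
    ∃ k : E × 𝕜 → G, AnalyticAt 𝕜 k z₀ ∧ ∀ᶠ z in 𝓝 z₀, f z = h z • k z := by
  obtain ⟨Ψ, hΨ, hΨz₀, hΨh, hhΨ⟩ := hh.exists_analyticAt_leftInverse_prodMk_fst hd
  rw [hz₀] at hΨ hΨz₀ hhΨ
  obtain ⟨Q, hQ, hfQ⟩ := (hf.comp_of_eq hΨ hΨz₀).exists_analyticAt_eventually_sub_eq_smul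
  have hΨt : Tendsto Ψ (𝓝 (z₀.1, 0)) (𝓝 z₀) := hΨ.continuousAt.tendsto.trans_eq (congrArg _ hΨz₀)
  have hzeroΨ : ∀ᶠ w in 𝓝 (z₀.1, (0 : 𝕜)), w.2 = 0 → f (Ψ w) = 0 := by
    filter_upwards [hhΨ, hΨt.eventually hzero] with w hw hfw hw₂
    exact hfw (hw.trans hw₂)
  have hslice : Tendsto (fun w : E × 𝕜 => (w.1, (0 : 𝕜))) (𝓝 (z₀.1, 0)) (𝓝 (z₀.1, 0)) :=
    (continuous_fst.prodMk continuous_const).tendsto' _ _ rfl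
  have htend : Tendsto (fun z => (z.1, h z)) (𝓝 z₀) (𝓝 (z₀.1, 0)) :=
    hz₀ ▸ (continuousAt_fst.prodMk hh.continuousAt).tendsto
  refine ⟨fun z => Q (z.1, h z), hQ.comp_of_eq (analyticAt_fst.prod hh) (by rw [hz₀]), ?_⟩
  filter_upwards [hΨh, htend.eventually hfQ, htend.eventually (hslice.eventually hzeroΨ)]
    with z hz hfz hz0
  simpa [hz, hz0] using hfz

theorem fderiv_apply_zero_one_of_eq_sub_smul {h : E × 𝕜 → G} {ht : 𝕜 → G} {x₀ : E} {y₀ : 𝕜}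
    (hh : DifferentiableAt 𝕜 h (x₀, y₀)) (ht_diff : DifferentiableAt 𝕜 ht y₀)
    (ht_eq : ∀ y, h (x₀, y) = (y - y₀) • ht y) :
    fderiv 𝕜 h (x₀, y₀) (0, 1) = ht y₀ := by
  have hline : HasDerivAt (fun y => h (x₀, y)) (fderiv 𝕜 h (x₀, y₀) (0, 1)) y₀ :=
    hh.hasFDerivAt.comp_hasDerivAt y₀ ((hasDerivAt_const y₀ x₀).prodMk (hasDerivAt_id y₀))
  have hprod : HasDerivAt (fun y => (y - y₀) • ht y) (ht y₀) y₀ := by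
    simpa using ((hasDerivAt_id y₀).sub_const y₀).fun_smul ht_diff.hasDerivAt
  exact hline.unique (by simpa only [ht_eq] using hprod)

open Classical in
/-- On the zero set of `h` this is the L'Hôpital value of `f / h` along the second coordinate. -/
noncomputable def sndQuotient (f h : E × 𝕜 → 𝕜) (z : E × 𝕜) : 𝕜 :=
  if h z = 0 then fderiv 𝕜 f z (0, 1) / fderiv 𝕜 h z (0, 1) else f z / h z

theorem eq_mul_sndQuotient {f h : E × 𝕜 → 𝕜} {z : E × 𝕜} (hzero : h z = 0 → f z = 0) :
    f z = h z * sndQuotient f h z := by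
  by_cases hz : h z = 0
  · simp [hz, hzero hz]
  · rw [sndQuotient, if_neg hz, mul_div_cancel₀ _ hz]

theorem sndQuotient_eq_of_eventuallyEq_mul {f h k : E × 𝕜 → 𝕜} {z : E × 𝕜}
    (hfhk : f =ᶠ[𝓝 z] h * k) (hh : DifferentiableAt 𝕜 h z) (hk : DifferentiableAt 𝕜 k z)
    (hd : h z = 0 → fderiv 𝕜 h z (0, 1) ≠ 0) :
    sndQuotient f h z = k z := by
  unfold sndQuotient
  split_ifs with hz
  · rw [hfhk.fderiv_eq, fderiv_mul hh hk]
    simp [hz, mul_div_cancel_right₀ _ (hd hz)]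
  · rw [hfhk.eq_of_nhds, Pi.mul_apply, mul_div_cancel_left₀ _ hz]

theorem analyticAt_sndQuotient [CompleteSpace 𝕜] {f h k : E × 𝕜 → 𝕜} {z₀ : E × 𝕜}
    (hh : ∀ᶠ z in 𝓝 z₀, AnalyticAt 𝕜 h z) (hd : ∀ᶠ z in 𝓝 z₀, h z = 0 → fderiv 𝕜 h z (0, 1) ≠ 0)
    (hk : AnalyticAt 𝕜 k z₀) (hfhk : f =ᶠ[𝓝 z₀] h * k) :
    AnalyticAt 𝕜 (sndQuotient f h) z₀ := by
  refine hk.congr ?_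
  filter_upwards [hh, hd, hk.eventually_analyticAt, hfhk.eventually_nhds] with z hhz hdz hkz hfz
  exact (sndQuotient_eq_of_eventuallyEq_mul hfz hhz.differentiableAt hkz.differentiableAt hdz).symm

/-- Lemma on division of real-analytic functions on ℝ².
If `f, h : ℝ² → ℝ` are real-analytic, every zero of `h` is a zero of `f`, and at each zero
`(x₀, y₀)` of `h` the one-variable function `y ↦ h (x₀, y)` has a zero of order exactly one
at `y₀` (i.e. `h (x₀, y) = (y - y₀) * h̃ y` with `h̃` real-analytic and `h̃ y₀ ≠ 0`), then
there is a real-analytic `g : ℝ² → ℝ` with `f = h * g`. -/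
theorem stmt_0 (f h : ℝ × ℝ → ℝ)
    (hf : ∀ z : ℝ × ℝ, AnalyticAt ℝ f z)
    (hh : ∀ z : ℝ × ℝ, AnalyticAt ℝ h z)
    (hzero : ∀ z : ℝ × ℝ, h z = 0 → f z = 0)
    (horder : ∀ x₀ y₀ : ℝ, h (x₀, y₀) = 0 →
      ∃ ht : ℝ → ℝ, (∀ y : ℝ, AnalyticAt ℝ ht y) ∧
        (∀ y : ℝ, h (x₀, y) = (y - y₀) * ht y) ∧ ht y₀ ≠ 0) :
    ∃ g : ℝ × ℝ → ℝ, (∀ z : ℝ × ℝ, AnalyticAt ℝ g z) ∧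
      ∀ z : ℝ × ℝ, f z = h z * g z := by
  have hd : ∀ z, h z = 0 → fderiv ℝ h z (0, 1) ≠ 0 := by
    rintro ⟨x₀, y₀⟩ hz
    obtain ⟨ht, ht_an, ht_eq, ht_ne⟩ := horder x₀ y₀ hz
    rwa [fderiv_apply_zero_one_of_eq_sub_smul (hh _).differentiableAt (ht_an y₀).differentiableAt
      ht_eq]
  refine ⟨sndQuotient f h, fun z₀ => ?_, fun z => eq_mul_sndQuotient (hzero z)⟩
  obtain ⟨k, hk, hfk⟩ : ∃ k, AnalyticAt ℝ k z₀ ∧ f =ᶠ[𝓝 z₀] h * k := by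
    by_cases hz₀ : h z₀ = 0
    · exact (hf z₀).exists_analyticAt_eventually_eq_smul (hh z₀) hz₀ (hd z₀ hz₀)
        (.of_forall hzero)
    · exact ⟨f / h, (hf z₀).div (hh z₀) hz₀,
        ((hh z₀).continuousAt.eventually_ne hz₀).mono fun z hz => (mul_div_cancel₀ _ hz).symm⟩
  exact analyticAt_sndQuotient (.of_forall hh) (.of_forall hd) hk hfk
end

section
/- Let d ≥ 1, let a = (a₁, …, a_d) ∈ ℝ^d be nonzero, let U ⊆ ℝ^d be open, and let q be a real-analytic function on U such that q(x) = 0 for every x ∈ U with ∑_{k=1}^d a_k x_k = 0. Then there exists a real-analytic function r on U such that q(x) = (∑_{k=1}^d a_k x_k)·r(x) for all x ∈ U. -/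
/-!
Let `ℓ` be the linear form, `v` a vector with `ℓ v = 1` and `π = id - ℓ(·) v` the projection onto
`ker ℓ` along `v`. Near a point `x₀` of the hyperplane write `q (x₀ + y) = ∑ pₙ (y, …, y)`. Since
`q (x₀ + π y) = 0`, also `q (x₀ + y) = ∑ (pₙ (y, …, y) - pₙ (π y, …, π y))`; replacing the slots
one at a time and using `y - π y = ℓ y • v` factors `ℓ y` out of every term, leaving a multilinear
series whose `n`-th coefficient has norm at most `(n + 1) Cⁿ ‖v‖ ‖pₙ₊₁‖`, hence of positive
radius. Its sum is a local analytic quotient. Globally the quotient is `q / ℓ` off the hyperplane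
and the derivative of `q` along `v` on it; by the product rule this agrees with every local
quotient.
-/

open Filter Topology
open scoped NNReal ENNReal

section

variable {𝕜 E F : Type*} [NontriviallyNormedField 𝕜] [NormedAddCommGroup E] [NormedSpace 𝕜 E]
  [NormedAddCommGroup F] [NormedSpace 𝕜 F]

theorem ContinuousMultilinearMap.curryLeft_apply_const {n : ℕ}
    (f : ContinuousMultilinearMap 𝕜 (fun _ : Fin (n + 1) => E) F) (x : E) :
    f.curryLeft x (fun _ => x) = f (fun _ => x) :=
  congrArg f (Fin.cons_self_tail (fun _ : Fin (n + 1) => x))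

/-- `divDiff v π m f (h₁, …, hₘ) = ∑_{i=0}^{m} f (π h₁, …, π hᵢ, v, hᵢ₊₁, …, hₘ)`, written through
currying so that it is visibly a continuous linear map in `f`. -/
noncomputable def divDiff (v : E) (π : E →L[𝕜] E) :
    (m : ℕ) → ContinuousMultilinearMap 𝕜 (fun _ : Fin (m + 1) => E) F →L[𝕜]
      ContinuousMultilinearMap 𝕜 (fun _ : Fin m => E) F
  | 0 => (ContinuousLinearMap.apply 𝕜 _ v).comp
      (continuousMultilinearCurryLeftEquiv 𝕜 (fun _ : Fin 1 => E) F : _ →L[𝕜] _)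
  | m + 1 =>
    (ContinuousLinearMap.apply 𝕜 _ v).comp
        (continuousMultilinearCurryLeftEquiv 𝕜 (fun _ : Fin (m + 2) => E) F : _ →L[𝕜] _) +
      ((continuousMultilinearCurryLeftEquiv 𝕜 (fun _ : Fin (m + 1) => E) F).symm : _ →L[𝕜] _).comp
        (((ContinuousLinearMap.compL 𝕜 E _ _ (divDiff v π m)).comp
            ((ContinuousLinearMap.compL 𝕜 E E _).flip π)).comp
          (continuousMultilinearCurryLeftEquiv 𝕜 (fun _ : Fin (m + 2) => E) F : _ →L[𝕜] _))

variable (v : E) (π : E →L[𝕜] E)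

theorem divDiff_zero_apply (f : ContinuousMultilinearMap 𝕜 (fun _ : Fin 1 => E) F) :
    divDiff v π 0 f = f.curryLeft v := rfl

theorem divDiff_succ_apply {m : ℕ} (f : ContinuousMultilinearMap 𝕜 (fun _ : Fin (m + 2) => E) F) :
    divDiff v π (m + 1) f =
      f.curryLeft v + ((divDiff v π m).comp (f.curryLeft.comp π)).uncurryLeft :=
  rfl

theorem sub_eq_smul_divDiff {ℓ : E →L[𝕜] 𝕜} (hπ : ∀ x, x - π x = ℓ x • v) :
    ∀ {m : ℕ} (f : ContinuousMultilinearMap 𝕜 (fun _ : Fin (m + 1) => E) F) (h : E),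
      f (fun _ => h) - f (fun _ => π h) = ℓ h • divDiff v π m f (fun _ => h)
  | 0, f, h => by
    rw [← f.curryLeft_apply_const, ← f.curryLeft_apply_const, divDiff_zero_apply,
      Subsingleton.elim (fun _ : Fin 0 => π h) (fun _ => h), ← sub_apply,
      ← map_sub, hπ, map_smul, smul_apply]
  | m + 1, f, h => by
    have hstep : f.curryLeft (π h) (fun _ => h) - f (fun _ => π h) =
        ℓ h • divDiff v π m (f.curryLeft (π h)) (fun _ => h) := by
      rw [← sub_eq_smul_divDiff hπ (f.curryLeft (π h)) h, f.curryLeft_apply_const]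
    calc f (fun _ => h) - f (fun _ => π h)
        = (f.curryLeft h - f.curryLeft (π h)) (fun _ => h) +
          (f.curryLeft (π h) (fun _ => h) - f (fun _ => π h)) := by
          rw [sub_apply, f.curryLeft_apply_const]; abel
      _ = ℓ h • divDiff v π (m + 1) f (fun _ => h) := by
          rw [hstep, ← map_sub, hπ, map_smul, smul_apply, ← smul_add]
          rfl

theorem norm_divDiff_le {C : ℝ} (hC : 1 ≤ C) (hπC : ‖π‖ ≤ C) :
    ∀ {m : ℕ} (f : ContinuousMultilinearMap 𝕜 (fun _ : Fin (m + 1) => E) F),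
      ‖divDiff v π m f‖ ≤ (m + 1) * C ^ m * ‖v‖ * ‖f‖
  | 0, f => by
    simpa [divDiff_zero_apply, mul_comm] using f.curryLeft.le_opNorm v
  | m + 1, f => by
    have hcurry : ‖f.curryLeft v‖ ≤ ‖v‖ * ‖f‖ := by
      simpa [mul_comm] using f.curryLeft.le_opNorm v
    have htail : ‖(divDiff v π m).comp (f.curryLeft.comp π)‖ ≤
        (m + 1) * C ^ (m + 1) * ‖v‖ * ‖f‖ := by
      calc _ ≤ ‖divDiff v π m‖ * (‖f.curryLeft‖ * ‖π‖) :=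
            (ContinuousLinearMap.opNorm_comp_le _ _).trans
              (by gcongr; exact ContinuousLinearMap.opNorm_comp_le _ _)
        _ ≤ ((m + 1) * C ^ m * ‖v‖) * (‖f‖ * C) := by
            gcongr
            · exact ContinuousLinearMap.opNorm_le_bound _ (by positivity)
                fun g => (norm_divDiff_le hC hπC g).trans_eq (by ring)
            · exact (ContinuousMultilinearMap.curryLeft_norm f).le
        _ = _ := by ring
    rw [divDiff_succ_apply]
    refine (norm_add_le _ _).trans ?_
    rw [ContinuousLinearMap.uncurryLeft_norm]
    have : ‖v‖ * ‖f‖ ≤ C ^ (m + 1) * ‖v‖ * ‖f‖ := by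
      have := one_le_pow₀ (n := m + 1) hC
      rw [mul_assoc]; exact le_mul_of_one_le_left (by positivity) this
    push_cast
    linarith

namespace FormalMultilinearSeries

noncomputable def divDiff (p : FormalMultilinearSeries 𝕜 E F) (v : E) (π : E →L[𝕜] E) :
    FormalMultilinearSeries 𝕜 E F :=
  fun n => _root_.divDiff v π n (p (n + 1))

theorem radius_divDiff_pos {p : FormalMultilinearSeries 𝕜 E F} (hp : 0 < p.radius)
    (v : E) (π : E →L[𝕜] E) : 0 < (p.divDiff v π).radius := by
  obtain ⟨R, hR0, hRp⟩ := ENNReal.lt_iff_exists_nnreal_btwn.1 hp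
  replace hR0 : 0 < R := ENNReal.coe_pos.1 hR0
  obtain ⟨M, -, hM⟩ := p.norm_mul_pow_le_of_lt_radius hRp
  have hR : (0 : ℝ) < R := hR0
  set C : ℝ≥0 := max 1 ‖π‖₊
  have hC : (1 : ℝ) ≤ C := by exact_mod_cast le_max_left 1 ‖π‖₊
  have hπC : ‖π‖ ≤ C := by exact_mod_cast le_max_right 1 ‖π‖₊
  -- the factor `2` in `ρ` absorbs the `n + 1` of `norm_divDiff_le`, via `n + 1 ≤ 2 ^ n`
  set ρ : ℝ≥0 := R / (2 * C)
  have hρ : (C : ℝ) * ρ = R / 2 := by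
    simp only [ρ, NNReal.coe_div, NNReal.coe_mul, NNReal.coe_ofNat]
    field_simp
  have hbound : ∀ n, ‖p.divDiff v π n‖ * (ρ : ℝ) ^ n ≤ ‖v‖ * M / R := by
    intro n
    have hn : ((n : ℝ) + 1) * (R / 2 : ℝ) ^ n ≤ (R : ℝ) ^ n := by
      have : ((n : ℝ) + 1) ≤ 2 ^ n := by exact_mod_cast Nat.lt_two_pow_self
      calc ((n : ℝ) + 1) * (R / 2 : ℝ) ^ n ≤ 2 ^ n * (R / 2 : ℝ) ^ n := by gcongr
        _ = (R : ℝ) ^ n := by rw [← mul_pow]; ring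
    have hpn : ‖p (n + 1)‖ * (R : ℝ) ^ n ≤ M / R := by
      rw [le_div_iff₀ hR, mul_assoc, ← pow_succ]; exact hM (n + 1)
    calc ‖p.divDiff v π n‖ * (ρ : ℝ) ^ n
        ≤ (n + 1) * (C : ℝ) ^ n * ‖v‖ * ‖p (n + 1)‖ * (ρ : ℝ) ^ n := by
          gcongr; exact norm_divDiff_le v π hC hπC _
      _ = ‖v‖ * (‖p (n + 1)‖ * (((n : ℝ) + 1) * (R / 2 : ℝ) ^ n)) := by
          rw [← hρ, mul_pow]; ring
      _ ≤ ‖v‖ * (M / R) := by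
          gcongr; exact (mul_le_mul_of_nonneg_left hn (norm_nonneg _)).trans hpn
      _ = ‖v‖ * M / R := by ring
  have hρ0 : 0 < ρ := div_pos hR0 (by positivity)
  exact lt_of_lt_of_le (by exact_mod_cast hρ0) ((p.divDiff v π).le_radius_of_bound _ hbound)

end FormalMultilinearSeries

theorem fderiv_apply_eq_of_eventuallyEq_smul {f g : E → F} {ℓ : E →L[𝕜] 𝕜} {v x : E}
    (hv : ℓ v = 1) (hx : ℓ x = 0) (hg : DifferentiableAt 𝕜 g x)
    (hfg : f =ᶠ[𝓝 x] fun y => ℓ y • g y) : fderiv 𝕜 f x v = g x := by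
  rw [hfg.fderiv_eq, (ℓ.hasFDerivAt.smul hg.hasFDerivAt).fderiv (f := fun y => ℓ y • g y)]
  simp [hx, hv]

variable [CompleteSpace F]

theorem HasFPowerSeriesOnBall.sub_comp_eq_smul_sum_divDiff {f : E → F}
    {p : FormalMultilinearSeries 𝕜 E F} {x : E} {r : ℝ≥0∞} (hf : HasFPowerSeriesOnBall f p x r)
    {ℓ : E →L[𝕜] 𝕜} {v : E} {π : E →L[𝕜] E} (hπ : ∀ x, x - π x = ℓ x • v) {y : E}
    (hy : y ∈ Metric.eball 0 r) (hπy : π y ∈ Metric.eball 0 r)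
    (hy' : y ∈ Metric.eball 0 (p.divDiff v π).radius) :
    f (x + y) - f (x + π y) = ℓ y • (p.divDiff v π).sum y := by
  have hdiff := (hf.hasSum hy).sub (hf.hasSum hπy)
  have hterm : ∀ n, p (n + 1) (fun _ => y) - p (n + 1) (fun _ => π y) =
      ℓ y • p.divDiff v π n (fun _ => y) := fun n => sub_eq_smul_divDiff v π hπ _ y
  have hzero : p 0 (fun _ => y) - p 0 (fun _ => π y) = 0 := by
    rw [Subsingleton.elim (fun _ : Fin 0 => y) (fun _ => π y), sub_self]
  have hshift := (hasSum_nat_add_iff' 1).2 hdiff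
  simp only [Finset.range_one, Finset.sum_singleton, hzero, sub_zero, hterm] at hshift
  exact hshift.unique (((p.divDiff v π).hasSum hy').const_smul (ℓ y))

theorem AnalyticAt.exists_eventuallyEq_smul_of_eventually_eq_zero {f : E → F} {x₀ : E}
    (hf : AnalyticAt 𝕜 f x₀) {ℓ : E →L[𝕜] 𝕜} {v : E} (hv : ℓ v = 1) (hx₀ : ℓ x₀ = 0)
    (hzero : ∀ᶠ x in 𝓝 x₀, ℓ x = 0 → f x = 0) :
    ∃ g : E → F, AnalyticAt 𝕜 g x₀ ∧ ∀ᶠ x in 𝓝 x₀, f x = ℓ x • g x := by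
  obtain ⟨p, r, hp⟩ := hf
  set π : E →L[𝕜] E := ContinuousLinearMap.id 𝕜 E - ℓ.smulRight v
  have hπ : ∀ x, x - π x = ℓ x • v := fun x => sub_sub_cancel x _
  have hℓπ : ∀ x, ℓ (π x) = 0 := fun x => by simp [π, hv]
  set q := p.divDiff v π
  have hq : 0 < q.radius := p.radius_divDiff_pos (hp.r_pos.trans_le hp.r_le) v π
  refine ⟨fun x => q.sum (x - x₀), ?_, ?_⟩
  · simpa using ((q.hasFPowerSeriesOnBall hq).comp_sub x₀).analyticAt
  have hπ0 : Tendsto (fun y => x₀ + π y) (𝓝 0) (𝓝 x₀) :=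
    ((continuous_const_add x₀).comp π.continuous).tendsto' 0 x₀ (by simp)
  have hsmall : ∀ᶠ y in 𝓝 (0 : E),
      y ∈ Metric.eball 0 r ∧ π y ∈ Metric.eball 0 r ∧ y ∈ Metric.eball 0 q.radius ∧
        f (x₀ + π y) = 0 :=
    Filter.Eventually.and (Metric.eball_mem_nhds 0 hp.r_pos) <|
      Filter.Eventually.and
        (π.continuous.tendsto' 0 0 (map_zero π) (Metric.eball_mem_nhds 0 hp.r_pos)) <|
      Filter.Eventually.and (Metric.eball_mem_nhds 0 hq) <|
      (hπ0.eventually hzero).mono fun y hy => hy (by rw [map_add, hx₀, hℓπ, add_zero])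
  filter_upwards [tendsto_sub_nhds_zero_iff.2 tendsto_id |>.eventually hsmall]
    with x ⟨hy, hπy, hyq, hfπ⟩
  have key := hp.sub_comp_eq_smul_sum_divDiff hπ hy hπy hyq
  rwa [add_sub_cancel, hfπ, sub_zero, map_sub, hx₀, sub_zero] at key

theorem AnalyticOnNhd.exists_eq_smul_of_eq_zero {ℓ : E →L[𝕜] 𝕜} (hℓ : ℓ ≠ 0) {U : Set E}
    (hU : IsOpen U) {f : E → F} (hf : AnalyticOnNhd 𝕜 f U)
    (hzero : ∀ x ∈ U, ℓ x = 0 → f x = 0) :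
    ∃ r : E → F, AnalyticOnNhd 𝕜 r U ∧ ∀ x ∈ U, f x = ℓ x • r x := by
  classical
  obtain ⟨w, hw⟩ := DFunLike.ne_iff.1 hℓ
  set v := (ℓ w)⁻¹ • w
  have hv : ℓ v = 1 := by simp [v, inv_mul_cancel₀ hw]
  set r : E → F := fun x => if ℓ x = 0 then fderiv 𝕜 f x v else (ℓ x)⁻¹ • f x
  refine ⟨r, fun x₀ hx₀ => ?_, fun x hx => ?_⟩
  · by_cases h0 : ℓ x₀ = 0
    · obtain ⟨g, hg, hfg⟩ := (hf x₀ hx₀).exists_eventuallyEq_smul_of_eventually_eq_zero hv h0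
        (Filter.eventually_of_mem (hU.mem_nhds hx₀) hzero)
      refine hg.congr ?_
      filter_upwards [hg.eventually_analyticAt, hfg.eventually_nhds] with x hgx hfgx
      by_cases hx : ℓ x = 0
      · simp [r, hx, fderiv_apply_eq_of_eventuallyEq_smul hv hx hgx.differentiableAt hfgx]
      · simp [r, hx, hfgx.self_of_nhds, inv_smul_smul₀ hx]
    · refine (((ℓ.analyticAt x₀).inv h0).smul (hf x₀ hx₀)).congr ?_
      filter_upwards [ℓ.continuous.continuousAt.eventually_ne h0] with x hx
      simp [r, hx]
  · by_cases hx' : ℓ x = 0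
    · simp [hx', hzero x hx hx']
    · simp [r, hx', smul_inv_smul₀ hx']

end

theorem stmt_1_general (d : ℕ)
    (a : EuclideanSpace ℝ (Fin d)) (ha : a ≠ 0)
    (U : Set (EuclideanSpace ℝ (Fin d))) (hU : IsOpen U)
    (q : EuclideanSpace ℝ (Fin d) → ℝ)
    (hq : ∀ x ∈ U, AnalyticAt ℝ q x)
    (hzero : ∀ x ∈ U, (∑ k : Fin d, a k * x k) = 0 → q x = 0) :
    ∃ r : EuclideanSpace ℝ (Fin d) → ℝ,
      (∀ x ∈ U, AnalyticAt ℝ r x) ∧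
      ∀ x ∈ U, q x = (∑ k : Fin d, a k * x k) * r x := by
  set ℓ : EuclideanSpace ℝ (Fin d) →L[ℝ] ℝ := innerSL ℝ a
  have hℓ : ∀ x, ℓ x = ∑ k, a k * x k := fun x => by
    simp [ℓ, PiLp.inner_apply, mul_comm]
  have hℓ0 : ℓ ≠ 0 := fun h => ha (by simpa [ℓ] using DFunLike.congr_fun h a)
  obtain ⟨r, hr, hqr⟩ := AnalyticOnNhd.exists_eq_smul_of_eq_zero hℓ0 hU hq
    fun x hx h => hzero x hx (by rwa [← hℓ])
  exact ⟨r, hr, fun x hx => by rw [← hℓ, ← smul_eq_mul]; exact hqr x hx⟩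

/-- If `a ∈ ℝ^d` is nonzero, `U ⊆ ℝ^d` is open and `q` is real-analytic on `U`
and vanishes on `U ∩ {x : ∑ k, a k * x k = 0}`, then `q x = (∑ k, a k * x k) * r x` on `U` for
some function `r` real-analytic on `U`. -/
theorem stmt_1 (d : ℕ) (hd : 1 ≤ d)
    (a : EuclideanSpace ℝ (Fin d)) (ha : a ≠ 0)
    (U : Set (EuclideanSpace ℝ (Fin d))) (hU : IsOpen U)
    (q : EuclideanSpace ℝ (Fin d) → ℝ)
    (hq : ∀ x ∈ U, AnalyticAt ℝ q x)
    (hzero : ∀ x ∈ U, (∑ k : Fin d, a k * x k) = 0 → q x = 0) :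
    ∃ r : EuclideanSpace ℝ (Fin d) → ℝ,
      (∀ x ∈ U, AnalyticAt ℝ r x) ∧
      ∀ x ∈ U, q x = (∑ k : Fin d, a k * x k) * r x :=
  stmt_1_general d a ha U hU q hq hzero
end

section
/- Let d ≥ 1 and let α₁, …, αₙ ∈ ℝ^d be nonzero vectors, no one of which is a real scalar multiple of another. Set p(X) = ∏_{i=1}^n ⟨α_i, X⟩. Let U ⊆ ℝ^d be open and let q be a real-analytic function on U such that q(X) = 0 for every X ∈ U with ⟨α_i, X⟩ = 0 for some i. Then there exists a real-analytic function r on U such that q(X) = p(X)·r(X) for all X ∈ U. -/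
/-!
The heart of the matter is division by a single linear form `L`. Let `q` be analytic at `x₀` with
`L x₀ = 0`, with power series `p`, and vanish on `ker L`. Choose `v` with `L v = 1` and let
`π = id - L(·) v` be the projection onto `ker L` along `v`. Since `q (x₀ + π y) = 0`,
`q (x₀ + y) = ∑ₘ (pₘ₊₁(y, …, y) - pₘ₊₁(π y, …, π y))`, and replacing the slots `y` by `π y` one at
a time telescopes each difference into `L y` times a sum of `m + 1` multilinear terms in `y`. The
resulting series still has positive radius, so the quotient is analytic.

Dividing by the forms one after another gives local factorizations `q = (∏ fᵢ) • r`: after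
dividing by `f a`, the quotient still vanishes on `ker f j` for `j ≠ a`, since it vanishes on
`ker f j ∩ {f a ≠ 0}`, which is dense in `ker f j` because `ker f j ⊄ ker f a`. Finally, all local
quotients agree with `q / P` on the dense set `{P ≠ 0}`, so they glue to the limit of `q / P`.
-/

open Filter Topology
open scoped RealInnerProductSpace

namespace FormalMultilinearSeries

variable {𝕜 E F : Type*} [NontriviallyNormedField 𝕜] [NormedAddCommGroup E] [NormedSpace 𝕜 E]
  [NormedAddCommGroup F] [NormedSpace 𝕜 F]

noncomputable def divTerm (p : FormalMultilinearSeries 𝕜 E F) (π : E →L[𝕜] E) (v : E) (m : ℕ)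
    (j : Fin (m + 1)) : E [×m]→L[𝕜] F :=
  ((p (m + 1)).compContinuousLinearMap
    fun i => if (i : ℕ) < j then π else ContinuousLinearMap.id 𝕜 E).curryMid j v

/-- For `π` with `y - π y = L y • v`, this is the power series of `(p.sum y - p.sum (π y)) / L y`,
by the telescoping identity `smul_divLinear_apply_const`. -/
noncomputable def divLinear (p : FormalMultilinearSeries 𝕜 E F) (π : E →L[𝕜] E) (v : E) :
    FormalMultilinearSeries 𝕜 E F :=
  fun m => ∑ j, p.divTerm π v m j

theorem radius_pos_of_norm_le {G : Type*} [NormedAddCommGroup G] [NormedSpace 𝕜 G]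
    {p : FormalMultilinearSeries 𝕜 E G} {s : FormalMultilinearSeries 𝕜 E F} (hp : 0 < p.radius)
    {C K : ℝ} (hC : 0 ≤ C) (hK : 0 < K)
    (h : ∀ m : ℕ, ‖s m‖ ≤ C * (m + 1) * K ^ m * ‖p (m + 1)‖) : 0 < s.radius := by
  obtain ⟨r, hr0, hrp⟩ := ENNReal.lt_iff_exists_nnreal_btwn.1 hp
  obtain ⟨A, -, hA⟩ := p.norm_mul_pow_le_of_lt_radius hrp
  have hr : (0 : ℝ) < r := by exact_mod_cast hr0
  have hρ : (0 : ℝ) < r / (2 * K) := by positivity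
  refine lt_of_lt_of_le ?_
    (s.le_radius_of_bound (C * A / r) (r := ⟨r / (2 * K), hρ.le⟩) fun m => ?_)
  · exact ENNReal.coe_pos.2 (NNReal.coe_pos.1 hρ)
  have h2 : ((m : ℝ) + 1) / 2 ^ m ≤ 1 := by
    rw [div_le_one (by positivity)]
    exact_mod_cast Nat.lt_two_pow_self
  calc ‖s m‖ * (r / (2 * K)) ^ m ≤ C * (m + 1) * K ^ m * ‖p (m + 1)‖ * (r / (2 * K)) ^ m := by
        gcongr; exact h m
    _ = C * ((m + 1) / 2 ^ m) * (‖p (m + 1)‖ * r ^ (m + 1)) / r := by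
        rw [div_pow, mul_pow, pow_succ]; field_simp
    _ ≤ C * 1 * A / r := by gcongr; exact hA (m + 1)
    _ = C * A / r := by ring

variable (p : FormalMultilinearSeries 𝕜 E F) (π : E →L[𝕜] E) (v : E)

theorem divTerm_apply_const (m : ℕ) (j : Fin (m + 1)) (x : E) :
    p.divTerm π v m j (fun _ => x) =
      p (m + 1) (Function.update (fun i : Fin (m + 1) => if (i : ℕ) < j then π x else x) j v) := by
  rw [divTerm, ContinuousMultilinearMap.curryMid_apply,
    ContinuousMultilinearMap.compContinuousLinearMap_apply]
  have hins : j.insertNth v (fun _ : Fin m => x) = Function.update (fun _ => x) j v :=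
    Fin.insertNth_removeNth j v fun _ => x
  rw [hins]
  congr 1
  ext i
  rcases eq_or_ne i j with rfl | hij
  · simp
  · simp only [Function.update_of_ne hij]; split_ifs <;> rfl

theorem smul_divTerm_apply_const {L : E →L[𝕜] 𝕜} (hπ : ∀ y, y - π y = L y • v) (m : ℕ)
    (j : Fin (m + 1)) (x : E) :
    L x • p.divTerm π v m j (fun _ => x) =
      p (m + 1) (fun i => if (i : ℕ) < j then π x else x) -
        p (m + 1) (fun i => if (i : ℕ) < j + 1 then π x else x) := by
  set base : Fin (m + 1) → E := fun i => if (i : ℕ) < j then π x else x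
  have hx : p (m + 1) base = p (m + 1) (Function.update base j x) := by
    rw [Function.update_eq_self_iff.mpr]; simp [base]
  have hπx : (fun i : Fin (m + 1) => if (i : ℕ) < j + 1 then π x else x) =
      Function.update base j (π x) := by
    ext i
    rcases eq_or_ne i j with rfl | hij
    · simp
    · have : (i : ℕ) < j + 1 ↔ (i : ℕ) < j := by have := Fin.val_ne_of_ne hij; omega
      simp [base, hij, this]
  rw [divTerm_apply_const, hπx]
  change L x • p (m + 1) (Function.update base j v) = p (m + 1) base - _
  rw [hx, ← ContinuousMultilinearMap.map_update_sub, hπ,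
    ContinuousMultilinearMap.map_update_smul]

theorem smul_divLinear_apply_const {L : E →L[𝕜] 𝕜} (hπ : ∀ y, y - π y = L y • v) (m : ℕ)
    (x : E) :
    L x • p.divLinear π v m (fun _ => x) = p (m + 1) (fun _ => x) - p (m + 1) (fun _ => π x) := by
  set G : ℕ → F := fun k => p (m + 1) fun i => if (i : ℕ) < k then π x else x
  have hG : ∀ j : Fin (m + 1), L x • p.divTerm π v m j (fun _ => x) = G j - G (j + 1) :=
    fun j => p.smul_divTerm_apply_const π v hπ m j x
  rw [divLinear, sum_apply, Finset.smul_sum, Fintype.sum_congr _ _ hG,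
    Fin.sum_univ_eq_sum_range (fun k => G k - G (k + 1)), Finset.sum_range_sub']
  simp [G, Fin.is_le]

theorem norm_divTerm_le (m : ℕ) (j : Fin (m + 1)) :
    ‖p.divTerm π v m j‖ ≤ ‖p (m + 1)‖ * max 1 ‖π‖ ^ (m + 1) * ‖v‖ := by
  refine (ContinuousLinearMap.le_opNorm _ v).trans ?_
  rw [ContinuousMultilinearMap.norm_curryMid]
  gcongr
  refine ((p (m + 1)).norm_compContinuousLinearMap_le _).trans ?_
  gcongr
  refine (Finset.prod_le_prod (fun _ _ => norm_nonneg _) fun i _ => ?_).trans_eq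
    (Fin.prod_const _ _)
  split_ifs
  · exact le_max_right _ _
  · exact ContinuousLinearMap.norm_id_le.trans (le_max_left _ _)

theorem norm_divLinear_le (m : ℕ) :
    ‖p.divLinear π v m‖ ≤ max 1 ‖π‖ * ‖v‖ * (m + 1) * max 1 ‖π‖ ^ m * ‖p (m + 1)‖ := by
  calc ‖p.divLinear π v m‖ ≤ ∑ _j : Fin (m + 1), ‖p (m + 1)‖ * max 1 ‖π‖ ^ (m + 1) * ‖v‖ :=
        (norm_sum_le _ _).trans (Finset.sum_le_sum fun j _ => p.norm_divTerm_le π v m j)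
    _ = max 1 ‖π‖ * ‖v‖ * (m + 1) * max 1 ‖π‖ ^ m * ‖p (m + 1)‖ := by simp; ring

theorem divLinear_radius_pos (hp : 0 < p.radius) : 0 < (p.divLinear π v).radius :=
  radius_pos_of_norm_le hp (by positivity) (by positivity) (p.norm_divLinear_le π v)

end FormalMultilinearSeries

section DivisionByLinearForm

variable {𝕜 E F : Type*} [NontriviallyNormedField 𝕜] [NormedAddCommGroup E] [NormedSpace 𝕜 E]
  [NormedAddCommGroup F] [NormedSpace 𝕜 F] [CompleteSpace F]

theorem HasFPowerSeriesAt.eventually_eq_smul_sum_divLinear {q : E → F}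
    {p : FormalMultilinearSeries 𝕜 E F} {x₀ : E} (hq : HasFPowerSeriesAt q p x₀)
    {L : E →L[𝕜] 𝕜} {π : E →L[𝕜] E} {v : E} (hπ : ∀ y, y - π y = L y • v)
    (h0 : ∀ᶠ y in 𝓝 0, q (x₀ + π y) = 0) :
    ∀ᶠ y in 𝓝 0, q (x₀ + y) = L y • (p.divLinear π v).sum y := by
  obtain ⟨ρ, hρ⟩ := hq
  have hs := (p.divLinear π v).hasFPowerSeriesOnBall (p.divLinear_radius_pos π v hρ.radius_pos)
  have hπ0 : Tendsto π (𝓝 0) (𝓝 0) := by simpa using π.continuous.tendsto 0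
  have hball := Metric.eball_mem_nhds (0 : E) hρ.r_pos
  filter_upwards [hball, Metric.eball_mem_nhds (0 : E) hs.r_pos, hπ0.eventually hball, h0]
    with y hy hys hπy hqπ
  have hq_sum : HasSum (fun n => p n fun _ => y) (q (x₀ + y)) := hρ.hasSum hy
  have hqπ_sum : HasSum (fun n => p n fun _ => π y) 0 := hqπ ▸ hρ.hasSum hπy
  have hdiff : HasSum (fun n => (p (n + 1) fun _ => y) - p (n + 1) fun _ => π y) (q (x₀ + y)) := by
    have := (hasSum_nat_add_iff' 1).2 (hq_sum.sub hqπ_sum)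
    simpa [Subsingleton.elim (fun _ : Fin 0 => y) fun _ => π y] using this
  have hdiv := (hs.hasSum hys).const_smul (L y)
  simp only [zero_add, p.smul_divLinear_apply_const π v hπ] at hdiv
  exact hdiff.unique hdiv

theorem AnalyticAt.exists_eq_smul_of_eq_zero_on_ker {q : E → F} {x₀ : E}
    (hq : AnalyticAt 𝕜 q x₀) (L : E →L[𝕜] 𝕜) (h0 : ∀ᶠ x in 𝓝 x₀, L x = 0 → q x = 0) :
    ∃ r : E → F, AnalyticAt 𝕜 r x₀ ∧ ∀ᶠ x in 𝓝 x₀, q x = L x • r x := by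
  by_cases hL : L = 0
  · exact ⟨0, analyticAt_const, h0.mono fun x hx => by simp [hx (by simp [hL])]⟩
  obtain hx₀ | hx₀ := ne_or_eq (L x₀) 0
  · refine ⟨fun x => (L x)⁻¹ • q x, ((L.analyticAt x₀).inv hx₀).smul hq, ?_⟩
    filter_upwards [L.continuous.continuousAt.eventually_ne hx₀] with x hx
    simp [smul_smul, hx]
  obtain ⟨u, hu⟩ : ∃ u, L u ≠ 0 := DFunLike.ne_iff.1 hL
  set v := (L u)⁻¹ • u
  set π := ContinuousLinearMap.id 𝕜 E - L.smulRight v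
  have hLπ : ∀ y, L (π y) = 0 := fun y => by simp [π, v, hu]
  have hπ : ∀ y, y - π y = L y • v := fun y => by simp [π]
  obtain ⟨p, hp⟩ := hq
  have hs := (p.divLinear π v).hasFPowerSeriesOnBall (p.divLinear_radius_pos π v hp.radius_pos)
  refine ⟨fun x => (p.divLinear π v).sum (x - x₀), by simpa using hs.analyticAt.comp_sub x₀, ?_⟩
  have hπ0 : Tendsto (fun y => x₀ + π y) (𝓝 0) (𝓝 x₀) := by
    simpa using (by fun_prop : Continuous fun y => x₀ + π y).tendsto 0
  have h0' : ∀ᶠ y in 𝓝 0, q (x₀ + π y) = 0 :=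
    (hπ0.eventually h0).mono fun y hy => hy (by simp [hLπ, hx₀])
  have hsub : Tendsto (fun x => x - x₀) (𝓝 x₀) (𝓝 0) := by
    simpa using (by fun_prop : Continuous fun x => x - x₀).tendsto x₀
  filter_upwards [hsub.eventually (hp.eventually_eq_smul_sum_divLinear hπ h0')] with x hx
  simpa [hx₀] using hx

end DivisionByLinearForm

section Lines

variable {𝕜 E : Type*} [NontriviallyNormedField 𝕜] [NormedAddCommGroup E] [NormedSpace 𝕜 E]

theorem tendsto_add_smul_nhdsNE_zero (x w : E) :
    Tendsto (fun t : 𝕜 => x + t • w) (𝓝[≠] 0) (𝓝 x) :=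
  ((by fun_prop : Continuous fun t : 𝕜 => x + t • w).tendsto' 0 x (by simp)).mono_left
    nhdsWithin_le_nhds

theorem ContinuousLinearMap.eventually_apply_add_smul_ne_zero (f : E →L[𝕜] 𝕜) (x : E) {w : E}
    (hw : f w ≠ 0) : ∀ᶠ t in 𝓝[≠] (0 : 𝕜), f (x + t • w) ≠ 0 := by
  have hne : ∀ᶠ t in 𝓝[≠] (0 : 𝕜), t ≠ -(f x / f w) := by
    rcases eq_or_ne (-(f x / f w)) 0 with h | h
    · rw [h]; exact eventually_mem_nhdsWithin
    · exact eventually_ne_nhdsWithin h.symm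
  filter_upwards [hne] with t ht h
  apply ht
  rw [map_add, map_smul, smul_eq_mul] at h
  field_simp
  linear_combination h

theorem ContinuousLinearMap.dense_setOf_apply_ne_zero {f : E →L[𝕜] 𝕜} (hf : f ≠ 0) :
    Dense {x | f x ≠ 0} := fun x => by
  obtain ⟨w, hw⟩ := DFunLike.ne_iff.1 hf
  exact mem_closure_of_tendsto (tendsto_add_smul_nhdsNE_zero x w)
    (f.eventually_apply_add_smul_ne_zero x hw)

theorem dense_setOf_prod_ne_zero {ι : Type*} {f : ι → E →L[𝕜] 𝕜} (s : Finset ι)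
    (hf : ∀ i ∈ s, f i ≠ 0) : Dense {x | ∏ i ∈ s, f i x ≠ 0} := by
  classical
  induction s using Finset.induction_on with
  | empty => simp
  | insert a s ha ih =>
    simp only [Finset.prod_insert ha, mul_ne_zero_iff, Set.ofPred_and]
    refine (ContinuousLinearMap.dense_setOf_apply_ne_zero (hf a (Finset.mem_insert_self a s))
      ).inter_of_isOpen_left (ih fun i hi => hf i (Finset.mem_insert_of_mem hi)) ?_
    exact isOpen_ne_fun (f a).continuous continuous_const

variable {F : Type*} [NormedAddCommGroup F] [NormedSpace 𝕜 F]

theorem ContinuousAt.eq_zero_of_smul_eq_zero_on_ker {r : E → F} {x : E} (hr : ContinuousAt r x)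
    {g h : E →L[𝕜] 𝕜} (hgh : ¬ g.ker ≤ h.ker) (hx : g x = 0)
    (hr0 : ∀ᶠ y in 𝓝 x, g y = 0 → h y • r y = 0) : r x = 0 := by
  obtain ⟨w, hwg, hwh⟩ := SetLike.not_le_iff_exists.1 hgh
  simp only [LinearMap.mem_ker, ContinuousLinearMap.coe_coe] at hwg hwh
  have hline := tendsto_add_smul_nhdsNE_zero (𝕜 := 𝕜) x w
  refine isClosed_singleton.mem_of_frequently_of_tendsto ?_ (hr.tendsto.comp hline)
  refine ((hline.eventually hr0).and (h.eventually_apply_add_smul_ne_zero x hwh)).frequently.mono ?_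
  rintro t ⟨ht, hht⟩
  exact (smul_eq_zero.1 (ht (by simp [hx, hwg]))).resolve_left hht

end Lines

section Factorization

variable {𝕜 E F : Type*} [NontriviallyNormedField 𝕜] [NormedAddCommGroup E] [NormedSpace 𝕜 E]
  [NormedAddCommGroup F] [NormedSpace 𝕜 F] [CompleteSpace F]

theorem AnalyticAt.exists_eq_prod_smul_of_eq_zero_on_ker {ι : Type*} {f : ι → E →L[𝕜] 𝕜}
    (hf : Pairwise fun i j => ¬ (f i).ker ≤ (f j).ker) (s : Finset ι) {q : E → F} {x₀ : E}
    (hq : AnalyticAt 𝕜 q x₀) (h0 : ∀ᶠ x in 𝓝 x₀, (∃ i ∈ s, f i x = 0) → q x = 0) :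
    ∃ r : E → F, AnalyticAt 𝕜 r x₀ ∧ ∀ᶠ x in 𝓝 x₀, q x = (∏ i ∈ s, f i x) • r x := by
  classical
  induction s using Finset.induction_on generalizing q with
  | empty => exact ⟨q, hq, by simp⟩
  | insert a s ha ih =>
    obtain ⟨r₁, hr₁, hq₁⟩ := hq.exists_eq_smul_of_eq_zero_on_ker (f a)
      (h0.mono fun x hx hax => hx ⟨a, Finset.mem_insert_self a s, hax⟩)
    have h0₁ : ∀ᶠ x in 𝓝 x₀, (∃ i ∈ s, f i x = 0) → r₁ x = 0 := by
      filter_upwards [(hq₁.and h0).eventually_nhds, hr₁.eventually_analyticAt] with x hx hr₁x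
      rintro ⟨j, hj, hjx⟩
      refine hr₁x.continuousAt.eq_zero_of_smul_eq_zero_on_ker
        (hf (ne_of_mem_of_not_mem hj ha)) hjx (hx.mono fun y hy hjy => ?_)
      rw [← hy.1, hy.2 ⟨j, Finset.mem_insert_of_mem hj, hjy⟩]
    obtain ⟨r, hr, hq₂⟩ := ih hr₁ h0₁
    refine ⟨r, hr, ?_⟩
    filter_upwards [hq₁, hq₂] with x h₁ h₂
    rw [Finset.prod_insert ha, h₁, h₂, mul_smul]

theorem exists_analyticAt_eq_smul_of_locally {P : E → 𝕜} {q : E → F} {U : Set E}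
    (hP : Dense {x | P x ≠ 0})
    (hloc : ∀ x₀ ∈ U, ∃ r : E → F, AnalyticAt 𝕜 r x₀ ∧ ∀ᶠ x in 𝓝 x₀, q x = P x • r x) :
    ∃ r : E → F, (∀ x ∈ U, AnalyticAt 𝕜 r x) ∧ ∀ x ∈ U, q x = P x • r x := by
  set r : E → F := fun x => limUnder (𝓝[{y | P y ≠ 0}] x) fun y => (P y)⁻¹ • q y
  suffices h : ∀ x₀ ∈ U, ∃ r₀ : E → F, AnalyticAt 𝕜 r₀ x₀ ∧ r =ᶠ[𝓝 x₀] r₀ ∧ q x₀ = P x₀ • r₀ x₀ by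
    refine ⟨r, fun x hx => ?_, fun x hx => ?_⟩ <;> obtain ⟨r₀, hr₀, hrr₀, hq⟩ := h x hx
    · exact hr₀.congr hrr₀.symm
    · rw [hq, hrr₀.self_of_nhds]
  intro x₀ hx₀
  obtain ⟨r₀, hr₀, hq⟩ := hloc x₀ hx₀
  refine ⟨r₀, hr₀, ?_, hq.self_of_nhds⟩
  filter_upwards [hr₀.eventually_analyticAt, hq.eventually_nhds] with x hr₀x hqx
  have := mem_closure_iff_nhdsWithin_neBot.1 (hP x)
  refine ((hr₀x.continuousAt.tendsto.mono_left nhdsWithin_le_nhds).congr' ?_).limUnder_eq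
  filter_upwards [hqx.filter_mono nhdsWithin_le_nhds, self_mem_nhdsWithin] with y hy hPy
  rw [hy, smul_smul, inv_mul_cancel₀ hPy, one_smul]

end Factorization

theorem exists_eq_smul_of_ker_innerSL_le {𝕜 E : Type*} [RCLike 𝕜] [NormedAddCommGroup E]
    [InnerProductSpace 𝕜 E] {a b : E} (h : (innerSL 𝕜 b).ker ≤ (innerSL 𝕜 a).ker) :
    ∃ t : 𝕜, a = t • b := by
  have hperp : (𝕜 ∙ b)ᗮ ≤ (𝕜 ∙ a)ᗮ := fun x hx => by
    rw [Submodule.mem_orthogonal_singleton_iff_inner_right] at hx ⊢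
    simpa using h (by simpa using hx)
  have hspan := Submodule.orthogonal_le hperp
  rw [Submodule.orthogonal_orthogonal, Submodule.orthogonal_orthogonal] at hspan
  obtain ⟨t, ht⟩ := Submodule.mem_span_singleton.1 (hspan (Submodule.mem_span_singleton_self a))
  exact ⟨t, ht.symm⟩

theorem stmt_2_general (d : ℕ) (n : ℕ)
    (α : Fin n → EuclideanSpace ℝ (Fin d))
    (hα : ∀ i, α i ≠ 0)
    (hprop : ∀ i j : Fin n, i ≠ j → ∀ t : ℝ, α i ≠ t • α j)
    (U : Set (EuclideanSpace ℝ (Fin d))) (hU : IsOpen U)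
    (q : EuclideanSpace ℝ (Fin d) → ℝ)
    (hq : ∀ x ∈ U, AnalyticAt ℝ q x)
    (hzero : ∀ x ∈ U, (∃ i : Fin n, ⟪α i, x⟫ = 0) → q x = 0) :
    ∃ r : EuclideanSpace ℝ (Fin d) → ℝ,
      (∀ x ∈ U, AnalyticAt ℝ r x) ∧
      ∀ x ∈ U, q x = (∏ i : Fin n, ⟪α i, x⟫) * r x := by
  set f : Fin n → EuclideanSpace ℝ (Fin d) →L[ℝ] ℝ := fun i => innerSL ℝ (α i)
  have hf : Pairwise fun i j => ¬ (f i).ker ≤ (f j).ker := fun i j hij hle => by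
    obtain ⟨t, ht⟩ := exists_eq_smul_of_ker_innerSL_le hle
    exact hprop j i (Ne.symm hij) t ht
  have hdense : Dense {x | ∏ i, f i x ≠ 0} :=
    dense_setOf_prod_ne_zero _ fun i _ h => hα i (by simpa [f] using congrArg (· (α i)) h)
  refine exists_analyticAt_eq_smul_of_locally hdense fun x₀ hx₀ => ?_
  refine (hq x₀ hx₀).exists_eq_prod_smul_of_eq_zero_on_ker hf Finset.univ ?_
  filter_upwards [hU.mem_nhds hx₀] with x hx
  rintro ⟨i, -, hi⟩
  exact hzero x hx ⟨i, hi⟩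

/-- Let `α 1, …, α n` be nonzero vectors in `ℝ^d`, no one of which is a real
scalar multiple of another, and `p X = ∏ i, ⟪α i, X⟫`. If `q` is real-analytic on an open set
`U` and vanishes at every `X ∈ U` with `⟪α i, X⟫ = 0` for some `i`, then `q = p * r` on `U`
for some `r` real-analytic on `U`. -/
theorem stmt_2 (d : ℕ) (hd : 1 ≤ d) (n : ℕ)
    (α : Fin n → EuclideanSpace ℝ (Fin d))
    (hα : ∀ i, α i ≠ 0)
    (hprop : ∀ i j : Fin n, i ≠ j → ∀ t : ℝ, α i ≠ t • α j)
    (U : Set (EuclideanSpace ℝ (Fin d))) (hU : IsOpen U)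
    (q : EuclideanSpace ℝ (Fin d) → ℝ)
    (hq : ∀ x ∈ U, AnalyticAt ℝ q x)
    (hzero : ∀ x ∈ U, (∃ i : Fin n, ⟪α i, x⟫ = 0) → q x = 0) :
    ∃ r : EuclideanSpace ℝ (Fin d) → ℝ,
      (∀ x ∈ U, AnalyticAt ℝ r x) ∧
      ∀ x ∈ U, q x = (∏ i : Fin n, ⟪α i, x⟫) * r x :=
  stmt_2_general d n α hα hprop U hU q hq hzero
end

section
/- With ∂(π) denoting the constant-coefficient differential operator obtained by composing the directional-derivative operators along the vectors α ∈ Σ⁺ (any fixed order; there are γ of them), the following identities hold for every X ∈ ℝ^d, X ≠ 0: (a) ∂(π)(|·|^{−d})(X) = 2^γ · (∏_{k=0}^{γ−1}(−d/2 − k)) · π(X) · |X|^{−d−2γ}; and (b) if γ ≥ 1, ∂(π)(log|·|)(X) = (−2)^{γ−1} (γ−1)! · π(X) · |X|^{−2γ}. -/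
open scoped BigOperators RealInnerProductSpace Classical
open Finset

noncomputable section

/-- Euclidean space `ℝ^d`. -/
abbrev E (d : ℕ) := EuclideanSpace ℝ (Fin d)

/-- The reflection `s_α x = x - 2 (⟪α, x⟫/⟪α, α⟫) α` fixing the hyperplane `α^⊥`. -/
def reflVec {d : ℕ} (α x : E d) : E d := x - (2 * ⟪α, x⟫ / ⟪α, α⟫) • α

/-- `Sig` is a reduced root system in `ℝ^d`: a finite set of nonzero vectors spanning `ℝ^d`,
with `Sig ∩ ℝα = {α, -α}` and `s_α (Sig) = Sig` for all `α ∈ Sig`. -/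
def IsRootSystem {d : ℕ} (Sig : Finset (E d)) : Prop :=
  (0 : E d) ∉ Sig ∧
  Submodule.span ℝ (Sig : Set (E d)) = ⊤ ∧
  (∀ α ∈ Sig, ∀ t : ℝ, t • α ∈ Sig → t = 1 ∨ t = -1) ∧
  (∀ α ∈ Sig, ∀ β ∈ Sig, reflVec α β ∈ Sig)

/-- `Sp` is a positive system for `Sig`: `Sp = {α ∈ Sig : ⟪α, v⟫ > 0}` for a vector `v` not
orthogonal to any root. -/
def IsPositiveSystem {d : ℕ} (Sig Sp : Finset (E d)) : Prop :=
  ∃ v : E d, (∀ α ∈ Sig, ⟪α, v⟫ ≠ 0) ∧ ∀ α : E d, α ∈ Sp ↔ α ∈ Sig ∧ 0 < ⟪α, v⟫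

/-- The Weyl group of `Sig`: the subgroup of the orthogonal group of `ℝ^d` generated by the
reflections `s_α`, `α ∈ Sig`. -/
def weylGroup {d : ℕ} (Sig : Finset (E d)) : Subgroup (E d ≃ₗᵢ[ℝ] E d) :=
  Subgroup.closure {w : E d ≃ₗᵢ[ℝ] E d | ∃ α ∈ Sig, ∀ x : E d, w x = reflVec α x}

/-- Determinant of an orthogonal transformation (`±1`). -/
def dsign {d : ℕ} (w : E d ≃ₗᵢ[ℝ] E d) : ℝ := LinearMap.det (w.toLinearEquiv.toLinearMap)

/-- `π(X) = ∏_{α ∈ Sp} ⟪α, X⟫`. -/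
def piP {d : ℕ} (Sp : Finset (E d)) (X : E d) : ℝ := ∏ α ∈ Sp, ⟪α, X⟫

/-- Composition of directional-derivative operators along the vectors of a list. -/
def Dop {d : ℕ} : List (E d) → (E d → ℝ) → E d → ℝ
  | [], f => f
  | v :: L, f => fun x => fderiv ℝ (Dop L f) x v

/-!
Write the function as `F(|x|²)`, with `F t = t^(-d/2)`, resp. `F t = (log t)/2`. Applying the
derivatives `∂_v`, `v ∈ Σ⁺`, one at a time, the Leibniz rule and `∂_v |x|² = 2⟪v, x⟫` give
`∂(π) F(|x|²) = ∑_{k+j=γ} 2^k F⁽ᵏ⁾(|x|²) Δ^j π(x) / (2^j j!)`.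
Each reflection `s_α`, `α ∈ Σ⁺`, permutes `Σ⁺` up to an odd number of sign changes, so `π` and
every `Δ^j π` are skew under `s_α` and vanish on the hyperplanes `α^⊥`. For `j ≥ 1` the polynomial
`Δ^j π` has degree `γ - 2j < γ` yet vanishes on `γ` distinct hyperplanes, so it is zero (restrict
it to a line meeting them at distinct points). Only the term `2^γ F⁽ᵞ⁾(|x|²) π(x)` survives.
-/

lemma Finset.sum_sum_erase_comm {ι M : Type*} [DecidableEq ι] [AddCommMonoid M] (S : Finset ι)
    (f : ι → ι → M) :
    ∑ a ∈ S, ∑ b ∈ S.erase a, f a b = ∑ b ∈ S, ∑ a ∈ S.erase b, f a b :=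
  Finset.sum_comm' fun a b => by simp only [Finset.mem_erase]; tauto

lemma Finset.sum_sum_sum_erase_rotate {ι M : Type*} [DecidableEq ι] [AddCommMonoid M]
    (S : Finset ι) (f : ι → ι → ι → M) :
    ∑ a ∈ S, ∑ b ∈ S.erase a, ∑ c ∈ (S.erase a).erase b, f a b c
      = ∑ c ∈ S, ∑ a ∈ S.erase c, ∑ b ∈ (S.erase c).erase a, f a b c := by
  calc _ = ∑ a ∈ S, ∑ c ∈ S.erase a, ∑ b ∈ (S.erase a).erase c, f a b c :=
        Finset.sum_congr rfl fun a _ => Finset.sum_sum_erase_comm _ _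
    _ = ∑ c ∈ S, ∑ a ∈ S.erase c, ∑ b ∈ (S.erase a).erase c, f a b c :=
        Finset.sum_sum_erase_comm S fun a c => ∑ b ∈ (S.erase a).erase c, f a b c
    _ = _ := Finset.sum_congr rfl fun c _ => Finset.sum_congr rfl fun a _ => by
        rw [Finset.erase_right_comm]

lemma Finset.image_erase_of_injOn {α β : Type*} [DecidableEq α] [DecidableEq β] {f : α → β}
    {s : Finset α} (hf : Set.InjOn f s) {a : α} (ha : a ∈ s) :
    (s.erase a).image f = (s.image f).erase (f a) := by
  ext y
  simp only [Finset.mem_image, Finset.mem_erase]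
  constructor
  · rintro ⟨b, ⟨hba, hb⟩, rfl⟩
    exact ⟨fun h => hba (hf hb ha h), b, hb, rfl⟩
  · rintro ⟨hya, b, hb, rfl⟩
    exact ⟨b, ⟨fun h => hya (h ▸ rfl), hb⟩, rfl⟩

lemma exists_forall_inner_ne_zero {F : Type*} [NormedAddCommGroup F] [InnerProductSpace ℝ F]
    (B : Finset F) (hB : ∀ c ∈ B, c ≠ 0) : ∃ u : F, ∀ c ∈ B, ⟪c, u⟫ ≠ 0 := by
  by_contra! h
  have hcover : ⋃ c : B, (LinearMap.ker (innerSL ℝ (c : F) : F →ₗ[ℝ] ℝ) : Set F) = Set.univ :=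
    Set.eq_univ_of_forall fun u => by
      obtain ⟨c, hc, hcu⟩ := h u
      exact Set.mem_iUnion.2 ⟨⟨c, hc⟩, by simpa using hcu⟩
  obtain ⟨⟨c, hc⟩, htop⟩ := Subspace.exists_eq_top_of_iUnion_eq_univ hcover
  have hcc : c ∈ LinearMap.ker (innerSL ℝ c : F →ₗ[ℝ] ℝ) := htop ▸ Submodule.mem_top
  exact hB c hc (by simpa using hcc)

/-- `contractedProd j S` is `Δ^j (∏_{v ∈ S} ⟪v, ·⟫) / (2^j j!)`: each step contracts an ordered
pair of distinct factors `⟪a, ·⟫ ⟪b, ·⟫` to `⟪a, b⟫`. -/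
def contractedProd {d : ℕ} : ℕ → Finset (E d) → E d → ℝ
  | 0, S, x => ∏ v ∈ S, ⟪v, x⟫
  | j + 1, S, x => (2 * (j + 1 : ℝ))⁻¹ *
      ∑ a ∈ S, ∑ b ∈ S.erase a, ⟪a, b⟫ * contractedProd j ((S.erase a).erase b) x

namespace contractedProd

variable {d : ℕ}

lemma zero_apply (S : Finset (E d)) (x : E d) : contractedProd 0 S x = ∏ v ∈ S, ⟪v, x⟫ := rfl

lemma sum_pairs (j : ℕ) (S : Finset (E d)) (x : E d) :
    ∑ a ∈ S, ∑ b ∈ S.erase a, ⟪a, b⟫ * contractedProd j ((S.erase a).erase b) x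
      = 2 * (j + 1) * contractedProd (j + 1) S x := by
  rw [contractedProd, ← mul_assoc, mul_inv_cancel₀ (by positivity), one_mul]

lemma eq_zero_of_card_lt {j : ℕ} {S : Finset (E d)} (h : S.card < 2 * j) (x : E d) :
    contractedProd j S x = 0 := by
  induction j generalizing S with
  | zero => omega
  | succ j ih =>
    rw [contractedProd]
    refine mul_eq_zero_of_right _ (Finset.sum_eq_zero fun a ha => Finset.sum_eq_zero
      fun b hb => mul_eq_zero_of_right _ (ih ?_))
    have := Finset.card_pos.mpr ⟨b, hb⟩
    rw [Finset.card_erase_of_mem hb, Finset.card_erase_of_mem ha] at *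
    omega

lemma sum_pairs_sum_erase {M : Type*} [AddCommMonoid M] [Module ℝ M] (j : ℕ)
    (S : Finset (E d)) (x : E d) (g : E d → M) :
    ∑ a ∈ S, ∑ b ∈ S.erase a, ⟪a, b⟫ •
        ∑ c ∈ (S.erase a).erase b, contractedProd j (((S.erase a).erase b).erase c) x • g c
      = (2 * (j + 1) : ℝ) • ∑ c ∈ S, contractedProd (j + 1) (S.erase c) x • g c := by
  simp_rw [Finset.smul_sum, smul_smul]
  rw [Finset.sum_sum_sum_erase_rotate]
  refine Finset.sum_congr rfl fun c _ => ?_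
  rw [← sum_pairs]
  simp_rw [Finset.sum_smul]
  refine Finset.sum_congr rfl fun a _ => Finset.sum_congr rfl fun b _ => ?_
  rw [Finset.erase_right_comm (a := b) (b := c), Finset.erase_right_comm (a := a) (b := c)]

lemma zero_insert {v : E d} {S : Finset (E d)} (hv : v ∉ S) (x : E d) :
    contractedProd 0 (insert v S) x = ⟪v, x⟫ * contractedProd 0 S x :=
  Finset.prod_insert hv

lemma two_mul_succ_insert (j : ℕ) {v : E d} {S : Finset (E d)} (hv : v ∉ S) (x : E d) :
    2 * (j + 1) * contractedProd (j + 1) (insert v S) x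
      = 2 * ∑ c ∈ S, ⟪v, c⟫ * contractedProd j (S.erase c) x
        + ∑ a ∈ S, ∑ b ∈ S.erase a,
            ⟪a, b⟫ * contractedProd j (insert v ((S.erase a).erase b)) x := by
  have hva : ∀ a ∈ S, v ≠ a := fun a ha h => hv (h ▸ ha)
  rw [← sum_pairs, Finset.sum_insert hv, Finset.erase_insert hv, two_mul, add_assoc]
  congr 1
  rw [← Finset.sum_add_distrib]
  refine Finset.sum_congr rfl fun a ha => ?_
  have hv' : v ∉ S.erase a := fun h => hv (Finset.mem_of_mem_erase h)
  rw [Finset.erase_insert_of_ne (hva a ha), Finset.sum_insert hv', Finset.erase_insert hv',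
    real_inner_comm]
  congr 1
  refine Finset.sum_congr rfl fun b hb => ?_
  rw [Finset.erase_insert_of_ne (hva b (Finset.mem_of_mem_erase hb))]

/-- In each term the factor `⟪v, ·⟫` is either left uncontracted or contracted with some
`c ∈ S`. -/
lemma succ_insert (j : ℕ) {v : E d} {S : Finset (E d)} (hv : v ∉ S) (x : E d) :
    contractedProd (j + 1) (insert v S) x
      = ⟪v, x⟫ * contractedProd (j + 1) S x + ∑ c ∈ S, ⟪v, c⟫ * contractedProd j (S.erase c) x := by
  induction j generalizing S with
  | zero =>
    have hsum : ∑ a ∈ S, ∑ b ∈ S.erase a,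
          ⟪a, b⟫ * contractedProd 0 (insert v ((S.erase a).erase b)) x
        = ⟪v, x⟫ * (2 * ((0 : ℕ) + 1) * contractedProd (0 + 1) S x) := by
      rw [← sum_pairs, Finset.mul_sum]
      refine Finset.sum_congr rfl fun a _ => ?_
      rw [Finset.mul_sum]
      refine Finset.sum_congr rfl fun b _ => ?_
      rw [zero_insert (fun h => hv (Finset.mem_of_mem_erase (Finset.mem_of_mem_erase h)))]
      ring
    refine mul_left_cancel₀ (by positivity : (2 * ((0 : ℕ) + 1 : ℝ)) ≠ 0) ?_
    rw [two_mul_succ_insert 0 hv, hsum]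
    ring
  | succ k ih =>
    have hsum : ∑ a ∈ S, ∑ b ∈ S.erase a,
          ⟪a, b⟫ * contractedProd (k + 1) (insert v ((S.erase a).erase b)) x
        = ⟪v, x⟫ * (2 * ((k + 1 : ℕ) + 1) * contractedProd (k + 1 + 1) S x)
          + 2 * (k + 1) * ∑ c ∈ S, contractedProd (k + 1) (S.erase c) x * ⟪v, c⟫ := by
      have h := sum_pairs_sum_erase k S x (fun c => ⟪v, c⟫)
      simp only [smul_eq_mul] at h
      rw [← sum_pairs, Finset.mul_sum, ← h, ← Finset.sum_add_distrib]
      refine Finset.sum_congr rfl fun a _ => ?_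
      rw [Finset.mul_sum, ← Finset.sum_add_distrib]
      refine Finset.sum_congr rfl fun b _ => ?_
      rw [ih (fun h => hv (Finset.mem_of_mem_erase (Finset.mem_of_mem_erase h)))]
      rw [mul_add, mul_left_comm, Finset.mul_sum, Finset.mul_sum]
      exact congrArg _ (Finset.sum_congr rfl fun c _ => by ring)
    refine mul_left_cancel₀ (by positivity : (2 * ((k + 1 : ℕ) + 1 : ℝ)) ≠ 0) ?_
    rw [two_mul_succ_insert (k + 1) hv, hsum]
    push_cast
    simp_rw [mul_comm (contractedProd (k + 1) _ x)]
    ring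

lemma hasFDerivAt (j : ℕ) (S : Finset (E d)) (x : E d) :
    HasFDerivAt (contractedProd j S)
      (∑ c ∈ S, contractedProd j (S.erase c) x • innerSL ℝ c) x := by
  induction j generalizing S with
  | zero =>
    exact HasFDerivAt.finsetProd (g := fun v y => ⟪v, y⟫) fun v _ => (innerSL ℝ v).hasFDerivAt
  | succ j ih =>
    have h := (HasFDerivAt.fun_sum (u := S) fun a _ => HasFDerivAt.fun_sum (u := S.erase a)
      fun b _ => (ih ((S.erase a).erase b)).const_mul ⟪a, b⟫).const_mul (2 * (j + 1 : ℝ))⁻¹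
    refine h.congr_fderiv ?_
    rw [sum_pairs_sum_erase, smul_smul, inv_mul_cancel₀ (by positivity), one_smul]

lemma image_eq_prod_mul {φ : E d → E d} {c : E d → ℝ} {S : Finset (E d)} (hφ : Set.InjOn φ S)
    {x y : E d} (hpair : ∀ a ∈ S, ∀ b ∈ S, ⟪φ a, φ b⟫ = c a * c b * ⟪a, b⟫)
    (hlin : ∀ a ∈ S, ⟪φ a, x⟫ = c a * ⟪a, y⟫) (j : ℕ) :
    contractedProd j (S.image φ) x = (∏ a ∈ S, c a) * contractedProd j S y := by
  induction j generalizing S with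
  | zero =>
    rw [zero_apply, zero_apply, Finset.prod_image hφ, ← Finset.prod_mul_distrib]
    exact Finset.prod_congr rfl hlin
  | succ j ih =>
    have hsub : ∀ {T}, T ⊆ S → ∀ a ∈ T, (T.erase a).image φ = (T.image φ).erase (φ a) :=
      fun hT _ ha => Finset.image_erase_of_injOn (hφ.mono (Finset.coe_subset.mpr hT)) ha
    rw [contractedProd, contractedProd, mul_left_comm, Finset.sum_image hφ]
    congr 1
    rw [Finset.mul_sum]
    refine Finset.sum_congr rfl fun a ha => ?_
    rw [← hsub subset_rfl a ha,
      Finset.sum_image (hφ.mono (Finset.coe_subset.mpr (Finset.erase_subset a S))), Finset.mul_sum]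
    refine Finset.sum_congr rfl fun b hb => ?_
    have hab : (S.erase a).erase b ⊆ S := (Finset.erase_subset _ _).trans (Finset.erase_subset _ _)
    rw [← hsub (Finset.erase_subset a S) b hb, ih (hφ.mono (Finset.coe_subset.mpr hab))
      (fun p hp q hq => hpair p (hab hp) q (hab hq)) (fun p hp => hlin p (hab hp)),
      hpair a ha b (Finset.mem_of_mem_erase hb), ← Finset.mul_prod_erase _ c ha,
      ← Finset.mul_prod_erase _ c hb]
    ring

open Polynomial in
lemma exists_polynomial_line (j : ℕ) (S : Finset (E d)) (x u : E d) :
    ∃ p : ℝ[X], p.natDegree ≤ S.card - 2 * j ∧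
      ∀ t : ℝ, contractedProd j S (x + t • u) = p.eval t := by
  induction j generalizing S with
  | zero =>
    refine ⟨∏ w ∈ S, (C ⟪w, u⟫ * X + C ⟪w, x⟫), ?_, fun t => ?_⟩
    · refine (natDegree_prod_le _ _).trans ?_
      refine (Finset.sum_le_sum fun w _ => natDegree_linear_le).trans ?_
      simp
    · simp only [zero_apply, eval_prod, eval_add, eval_mul, eval_C, eval_X,
        inner_add_right, real_inner_smul_right]
      exact Finset.prod_congr rfl fun w _ => by ring
  | succ j ih =>
    choose P hPdeg hPeval using ih
    refine ⟨C (2 * (j + 1 : ℝ))⁻¹ *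
      ∑ a ∈ S, ∑ b ∈ S.erase a, C ⟪a, b⟫ * P ((S.erase a).erase b), ?_, fun t => ?_⟩
    · refine (natDegree_C_mul_le _ _).trans <| natDegree_sum_le_of_forall_le _ _ fun a ha =>
        natDegree_sum_le_of_forall_le _ _ fun b hb => (natDegree_C_mul_le _ _).trans ?_
      refine (hPdeg _).trans ?_
      rw [Finset.card_erase_of_mem hb, Finset.card_erase_of_mem ha]
      omega
    · simp only [contractedProd, eval_mul, eval_C, eval_finsetSum, hPeval]

end contractedProd

section Reflection

variable {d : ℕ}

lemma reflVec_self (α : E d) : reflVec α α = -α := by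
  by_cases hα : α = 0
  · simp [reflVec, hα]
  · rw [reflVec, mul_div_assoc, div_self (inner_self_ne_zero.mpr hα), mul_one, two_smul]
    abel

lemma reflVec_neg (α x : E d) : reflVec α (-x) = -reflVec α x := by
  simp only [reflVec, inner_neg_right, mul_neg, neg_div, neg_smul]
  abel

lemma reflVec_of_inner_eq_zero {α x : E d} (hx : ⟪α, x⟫ = 0) : reflVec α x = x := by
  simp [reflVec, hx]

lemma inner_reflVec_left (α u w : E d) : ⟪reflVec α u, w⟫ = ⟪u, reflVec α w⟫ := by
  simp only [reflVec, inner_sub_left, inner_sub_right, real_inner_smul_left,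
    real_inner_smul_right, real_inner_comm α u, real_inner_comm w α]
  ring

lemma reflVec_reflVec {α : E d} (hα : α ≠ 0) (x : E d) : reflVec α (reflVec α x) = x := by
  have h : ⟪α, α⟫ ≠ 0 := inner_self_ne_zero.mpr hα
  rw [reflVec, ← inner_reflVec_left, reflVec_self, inner_neg_left, reflVec, sub_sub, ← add_smul]
  field_simp
  simp

lemma inner_reflVec_reflVec {α : E d} (hα : α ≠ 0) (u w : E d) :
    ⟪reflVec α u, reflVec α w⟫ = ⟪u, w⟫ := by
  rw [inner_reflVec_left, reflVec_reflVec hα]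

lemma eq_smul_of_reflVec_eq_neg {α x : E d} (h : reflVec α x = -x) :
    x = (⟪α, x⟫ / ⟪α, α⟫) • α := by
  rw [reflVec, sub_eq_iff_eq_add, ← sub_eq_iff_eq_add', sub_neg_eq_add, ← two_smul ℝ x] at h
  rwa [← smul_right_injective (E d) (two_ne_zero' ℝ) |>.eq_iff, smul_smul, ← mul_div_assoc]

end Reflection

section SignedReflection

variable {d : ℕ}

structure IsSignedReflectionStable (S : Finset (E d)) : Prop where
  ne_zero : ∀ α ∈ S, α ≠ 0
  eq_one_of_smul_mem : ∀ α ∈ S, ∀ t : ℝ, t • α ∈ S → t = 1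
  reflVec_mem_or_neg_mem : ∀ α ∈ S, ∀ β ∈ S, reflVec α β ∈ S ∨ -reflVec α β ∈ S

lemma IsPositiveSystem.isSignedReflectionStable {Sig Sp : Finset (E d)}
    (hroot : IsRootSystem Sig) (hpos : IsPositiveSystem Sig Sp) : IsSignedReflectionStable Sp := by
  obtain ⟨hzero, -, hreduced, hrefl⟩ := hroot
  obtain ⟨v, hv, hSp⟩ := hpos
  have hneg : ∀ β ∈ Sig, -β ∈ Sig := fun β hβ => reflVec_self β ▸ hrefl β hβ β hβ
  refine ⟨fun α hα h => hzero (h ▸ ((hSp α).1 hα).1), fun α hα t ht => ?_, fun α hα β hβ => ?_⟩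
  · obtain ⟨hαSig, hαv⟩ := (hSp α).1 hα
    obtain ⟨htSig, htv⟩ := (hSp _).1 ht
    refine (hreduced α hαSig t htSig).resolve_right fun h => ?_
    rw [h, neg_one_smul, inner_neg_left] at htv
    linarith
  · have hmem := hrefl α ((hSp α).1 hα).1 β ((hSp β).1 hβ).1
    rcases (hv _ hmem).lt_or_gt with hlt | hgt
    · exact Or.inr ((hSp _).2 ⟨hneg _ hmem, by rw [inner_neg_left]; linarith⟩)
    · exact Or.inl ((hSp _).2 ⟨hmem, hgt⟩)

def reflSign (S : Finset (E d)) (α γ : E d) : ℝ := if reflVec α γ ∈ S then 1 else -1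

def signedRefl (S : Finset (E d)) (α γ : E d) : E d := reflSign S α γ • reflVec α γ

lemma reflSign_mul_self (S : Finset (E d)) (α γ : E d) : reflSign S α γ * reflSign S α γ = 1 := by
  unfold reflSign; split_ifs <;> norm_num

namespace IsSignedReflectionStable

variable {S : Finset (E d)} (hS : IsSignedReflectionStable S)
include hS

lemma neg_notMem {β : E d} (hβ : β ∈ S) : -β ∉ S := fun h =>
  absurd (hS.eq_one_of_smul_mem β hβ (-1) (by rwa [neg_one_smul])) (by norm_num)

lemma eq_of_eq_smul {β γ : E d} (hβ : β ∈ S) (hγ : γ ∈ S) {t : ℝ} (h : β = t • γ) : β = γ := by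
  rwa [hS.eq_one_of_smul_mem γ hγ t (h ▸ hβ), one_smul] at h

lemma smul_sub_smul_ne_zero {β δ : E d} (hβ : β ∈ S) (hδ : δ ∈ S) (hne : β ≠ δ) {a b : ℝ}
    (ha : a ≠ 0) : a • β - b • δ ≠ 0 := by
  intro h
  refine hne (hS.eq_of_eq_smul hβ hδ (t := b / a) ?_)
  rw [sub_eq_zero] at h
  rw [div_eq_inv_mul, mul_smul, ← h, smul_smul, inv_mul_cancel₀ ha, one_smul]

/-- The line `t ↦ x + t • u` meets the hyperplanes `β^⊥`, `β ∈ S`, at the pairwise distinct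
parameters `t = -⟪β, x⟫ / ⟪β, u⟫`. -/
lemma exists_transversal_line {x : E d} (hx : ∀ β ∈ S, ⟪β, x⟫ ≠ 0) :
    ∃ u : E d, (∀ β ∈ S, ⟪β, u⟫ ≠ 0) ∧ Set.InjOn (fun β => -⟪β, x⟫ / ⟪β, u⟫) S := by
  obtain ⟨u, hu⟩ := exists_forall_inner_ne_zero
    (S ∪ S.offDiag.image fun q => ⟪q.2, x⟫ • q.1 - ⟪q.1, x⟫ • q.2) (by
      simp only [Finset.mem_union, Finset.mem_image, Finset.mem_offDiag]
      rintro c (hc | ⟨⟨β, δ⟩, ⟨hβ, hδ, hne⟩, rfl⟩)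
      · exact hS.ne_zero c hc
      · exact hS.smul_sub_smul_ne_zero hβ hδ hne (hx δ hδ))
  have huS : ∀ β ∈ S, ⟪β, u⟫ ≠ 0 := fun β hβ => hu β (Finset.mem_union_left _ hβ)
  refine ⟨u, huS, fun β hβ δ hδ h => ?_⟩
  by_contra hne
  refine hu _ (Finset.mem_union_right _ (Finset.mem_image_of_mem _
    (Finset.mem_offDiag.2 ⟨hβ, hδ, hne⟩ : (β, δ) ∈ S.offDiag))) ?_
  simp only [neg_div, neg_inj, div_eq_div_iff (huS β hβ) (huS δ hδ)] at h
  simp only [inner_sub_left, real_inner_smul_left]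
  linarith

section

variable {α : E d} (hα : α ∈ S)
include hα

lemma signedRefl_mem {γ : E d} (hγ : γ ∈ S) : signedRefl S α γ ∈ S := by
  unfold signedRefl reflSign
  split_ifs with h
  · rwa [one_smul]
  · rw [neg_one_smul]
    exact (hS.reflVec_mem_or_neg_mem α hα γ hγ).resolve_left h

lemma reflVec_signedRefl (γ : E d) : reflVec α (signedRefl S α γ) = reflSign S α γ • γ := by
  have hα0 := hS.ne_zero α hα
  unfold signedRefl reflSign
  split_ifs
  · rw [one_smul, one_smul, reflVec_reflVec hα0]
  · rw [neg_one_smul, neg_one_smul, reflVec_neg, reflVec_reflVec hα0]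

lemma reflSign_signedRefl {γ : E d} (hγ : γ ∈ S) :
    reflSign S α (signedRefl S α γ) = reflSign S α γ := by
  rw [reflSign, hS.reflVec_signedRefl hα]
  by_cases h : reflVec α γ ∈ S
  · simp only [reflSign, if_pos h, one_smul, if_pos hγ]
  · simp only [reflSign, if_neg h, neg_one_smul, if_neg (hS.neg_notMem hγ)]

lemma signedRefl_signedRefl {γ : E d} (hγ : γ ∈ S) :
    signedRefl S α (signedRefl S α γ) = γ := by
  rw [signedRefl, hS.reflSign_signedRefl hα hγ, hS.reflVec_signedRefl hα, smul_smul,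
    reflSign_mul_self, one_smul]

lemma reflSign_self : reflSign S α α = -1 := by
  rw [reflSign, reflVec_self, if_neg (hS.neg_notMem hα)]

/-- `s_α α = -α`; the other sign changes come in pairs `{γ, signedRefl S α γ}`. -/
lemma prod_reflSign : ∏ γ ∈ S, reflSign S α γ = -1 := by
  have hfix : signedRefl S α α = α := by
    rw [signedRefl, hS.reflSign_self hα, reflVec_self, neg_one_smul, neg_neg]
  have hpairs : ∏ γ ∈ S.erase α, reflSign S α γ = 1 := by
    refine Finset.prod_involution (fun γ _ => signedRefl S α γ)
      (fun γ hγ => by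
        rw [hS.reflSign_signedRefl hα (Finset.mem_of_mem_erase hγ), reflSign_mul_self])
      (fun γ hγ hsign heq => ?_)
      (fun γ hγ => Finset.mem_erase.2
        ⟨fun h => ?_, hS.signedRefl_mem hα (Finset.mem_of_mem_erase hγ)⟩)
      (fun γ hγ => hS.signedRefl_signedRefl hα (Finset.mem_of_mem_erase hγ))
    · obtain ⟨hγα, hγ⟩ := Finset.mem_erase.1 hγ
      have hnot : reflVec α γ ∉ S := fun h => hsign (if_pos h)
      rw [signedRefl, reflSign, if_neg hnot, neg_one_smul, neg_eq_iff_eq_neg] at heq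
      exact hγα (hS.eq_of_eq_smul hγ hα (eq_smul_of_reflVec_eq_neg heq))
    · refine (Finset.mem_erase.1 hγ).1 ?_
      rw [← hS.signedRefl_signedRefl hα (Finset.mem_of_mem_erase hγ), h, hfix]
  rw [← Finset.mul_prod_erase S _ hα, hpairs, hS.reflSign_self hα, mul_one]

lemma image_signedRefl : S.image (signedRefl S α) = S := by
  ext γ
  refine ⟨fun h => ?_, fun hγ =>
    Finset.mem_image.2 ⟨_, hS.signedRefl_mem hα hγ, hS.signedRefl_signedRefl hα hγ⟩⟩
  obtain ⟨β, hβ, rfl⟩ := Finset.mem_image.1 h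
  exact hS.signedRefl_mem hα hβ

lemma contractedProd_reflVec (j : ℕ) (x : E d) :
    contractedProd j S (reflVec α x) = -contractedProd j S x := by
  have hα0 := hS.ne_zero α hα
  have h := contractedProd.image_eq_prod_mul (φ := signedRefl S α) (c := reflSign S α)
    (x := x) (y := reflVec α x)
    (fun a ha b hb hab => by
      rw [← hS.signedRefl_signedRefl hα ha, hab, hS.signedRefl_signedRefl hα hb])
    (fun a _ b _ => by
      rw [signedRefl, signedRefl, real_inner_smul_left, real_inner_smul_right,
        inner_reflVec_reflVec hα0]
      ring)
    (fun a _ => by rw [signedRefl, real_inner_smul_left, inner_reflVec_left]) j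
  rw [hS.image_signedRefl hα, hS.prod_reflSign hα] at h
  linarith

lemma contractedProd_eq_zero_of_inner_eq_zero (j : ℕ) {x : E d} (hx : ⟪α, x⟫ = 0) :
    contractedProd j S x = 0 := by
  have h := hS.contractedProd_reflVec hα j x
  rw [reflVec_of_inner_eq_zero hx] at h
  linarith

end

lemma contractedProd_eq_zero {j : ℕ} (hj : 1 ≤ j) (x : E d) : contractedProd j S x = 0 := by
  by_cases hcard : S.card < 2 * j
  · exact contractedProd.eq_zero_of_card_lt hcard x
  by_cases hx : ∃ β ∈ S, ⟪β, x⟫ = 0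
  · obtain ⟨β, hβ, hβx⟩ := hx
    exact hS.contractedProd_eq_zero_of_inner_eq_zero hβ j hβx
  push Not at hcard hx
  obtain ⟨u, hu, hinj⟩ := hS.exists_transversal_line hx
  obtain ⟨p, hpdeg, hp⟩ := contractedProd.exists_polynomial_line j S x u
  have hp0 : p = 0 := by
    refine Polynomial.eq_zero_of_natDegree_lt_card_of_eval_eq_zero' p (S.image _) ?_
      (by rw [Finset.card_image_of_injOn hinj]; omega)
    simp only [Finset.mem_image, forall_exists_index, and_imp]
    rintro _ β hβ rfl
    rw [← hp]
    refine hS.contractedProd_eq_zero_of_inner_eq_zero hβ j ?_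
    rw [inner_add_right, real_inner_smul_right, div_mul_cancel₀ _ (hu β hβ), add_neg_cancel]
  simpa [hp0] using hp 0
end IsSignedReflectionStable

end SignedReflection

section Radial

variable {d : ℕ} (f : ℕ → ℝ → ℝ)

def radialExpansion (n : ℕ) (S : Finset (E d)) (x : E d) : ℝ :=
  ∑ p ∈ antidiagonal n, 2 ^ p.1 * f p.1 (‖x‖ ^ 2) * contractedProd p.2 S x

variable {f}

lemma hasFDerivAt_comp_norm_sq {g : ℝ → ℝ} {g' : ℝ} {x : E d} (hg : HasDerivAt g g' (‖x‖ ^ 2)) :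
    HasFDerivAt (fun y : E d => g (‖y‖ ^ 2)) (g' • (2 : ℝ) • innerSL ℝ x) x := by
  refine (hg.hasFDerivAt.comp x (hasStrictFDerivAt_norm_sq x).hasFDerivAt).congr_fderiv ?_
  ext v
  simp only [ContinuousLinearMap.comp_apply, ContinuousLinearMap.toSpanSingleton_apply,
    smul_apply, innerSL_apply_apply, smul_eq_mul]
  ring

lemma fderiv_radialExpansion_apply (hf : ∀ k t, 0 < t → HasDerivAt (f k) (f (k + 1) t) t)
    (n : ℕ) (S : Finset (E d)) {x : E d} (hx : x ≠ 0) (v : E d) :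
    fderiv ℝ (radialExpansion f n S) x v = ∑ p ∈ antidiagonal n, 2 ^ p.1 *
      (2 * f (p.1 + 1) (‖x‖ ^ 2) * ⟪v, x⟫ * contractedProd p.2 S x
        + f p.1 (‖x‖ ^ 2) * ∑ c ∈ S, ⟪v, c⟫ * contractedProd p.2 (S.erase c) x) := by
  have hr : ∀ k, HasFDerivAt (fun y : E d => f k (‖y‖ ^ 2))
      (f (k + 1) (‖x‖ ^ 2) • (2 : ℝ) • innerSL ℝ x) x :=
    fun k => hasFDerivAt_comp_norm_sq (hf k _ (by positivity))
  have h := HasFDerivAt.fun_sum (u := antidiagonal n) fun p _ =>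
    ((hr p.1).const_mul (2 ^ p.1)).mul (contractedProd.hasFDerivAt p.2 S x)
  rw [(show HasFDerivAt (radialExpansion f n S) _ x from h).fderiv]
  simp only [FunLike.coe_sum, Finset.sum_apply, add_apply,
    FunLike.coe_smul, Pi.smul_apply, smul_eq_mul, innerSL_apply_apply]
  refine Finset.sum_congr rfl fun p _ => ?_
  have hcomm : ∀ c, contractedProd p.2 (S.erase c) x * ⟪c, v⟫
      = ⟪v, c⟫ * contractedProd p.2 (S.erase c) x := fun c => by rw [real_inner_comm]; ring
  simp_rw [hcomm, real_inner_comm x v]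
  ring

lemma radialExpansion_succ_insert (n : ℕ) {v : E d} {S : Finset (E d)} (hv : v ∉ S)
    (hS : S.card ≤ n) (x : E d) :
    radialExpansion f (n + 1) (insert v S) x = ∑ p ∈ antidiagonal n, 2 ^ p.1 *
      (2 * f (p.1 + 1) (‖x‖ ^ 2) * ⟪v, x⟫ * contractedProd p.2 S x
        + f p.1 (‖x‖ ^ 2) * ∑ c ∈ S, ⟪v, c⟫ * contractedProd p.2 (S.erase c) x) := by
  set r := ‖x‖ ^ 2
  have hshift : 2 ^ (n + 1) * f (n + 1) r * contractedProd 0 S x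
        + ∑ p ∈ antidiagonal n, 2 ^ p.1 * f p.1 r * contractedProd (p.2 + 1) S x
      = ∑ p ∈ antidiagonal n, 2 ^ (p.1 + 1) * f (p.1 + 1) r * contractedProd p.2 S x := by
    have h1 := Finset.Nat.sum_antidiagonal_succ' (n := n)
      (f := fun p => 2 ^ p.1 * f p.1 r * contractedProd p.2 S x)
    rw [Finset.Nat.sum_antidiagonal_succ, contractedProd.eq_zero_of_card_lt (by omega)] at h1
    simpa using h1.symm
  have hsplit : ∑ p ∈ antidiagonal n, 2 ^ p.1 *
        (2 * f (p.1 + 1) r * ⟪v, x⟫ * contractedProd p.2 S x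
          + f p.1 r * ∑ c ∈ S, ⟪v, c⟫ * contractedProd p.2 (S.erase c) x)
      = ⟪v, x⟫ * ∑ p ∈ antidiagonal n, 2 ^ (p.1 + 1) * f (p.1 + 1) r * contractedProd p.2 S x
        + ∑ p ∈ antidiagonal n, 2 ^ p.1 * f p.1 r *
            ∑ c ∈ S, ⟪v, c⟫ * contractedProd p.2 (S.erase c) x := by
    rw [Finset.mul_sum, ← Finset.sum_add_distrib]
    exact Finset.sum_congr rfl fun p _ => by ring
  rw [hsplit, ← hshift, radialExpansion, Finset.Nat.sum_antidiagonal_succ', mul_add,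
    Finset.mul_sum, add_assoc, ← Finset.sum_add_distrib]
  simp only [contractedProd.zero_insert hv, contractedProd.succ_insert _ hv]
  congr 1
  · ring
  · exact Finset.sum_congr rfl fun p _ => by ring

lemma Dop_eq_radialExpansion (hf : ∀ k t, 0 < t → HasDerivAt (f k) (f (k + 1) t) t)
    {l : List (E d)} (hl : l.Nodup) {x : E d} (hx : x ≠ 0) :
    Dop l (fun y => f 0 (‖y‖ ^ 2)) x = radialExpansion f l.length l.toFinset x := by
  induction l generalizing x with
  | nil => simp [Dop, radialExpansion, contractedProd.zero_apply]
  | cons v l ih =>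
    obtain ⟨hvl, hl⟩ := List.nodup_cons.1 hl
    have hloc : Dop l (fun y => f 0 (‖y‖ ^ 2)) =ᶠ[nhds x] radialExpansion f l.length l.toFinset :=
      Filter.eventuallyEq_of_mem (isOpen_compl_singleton.mem_nhds hx) fun y hy => ih hl hy
    change fderiv ℝ (Dop l _) x v = _
    rw [hloc.fderiv_eq, fderiv_radialExpansion_apply hf _ _ hx, List.length_cons,
      List.toFinset_cons, radialExpansion_succ_insert _ (by simpa using hvl)
        (List.toFinset_card_le l)]

end Radial

lemma IsSignedReflectionStable.radialExpansion_eq {d : ℕ} {S : Finset (E d)}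
    (hS : IsSignedReflectionStable S) (f : ℕ → ℝ → ℝ) (x : E d) :
    radialExpansion f S.card S x = 2 ^ S.card * f S.card (‖x‖ ^ 2) * piP S x := by
  rw [radialExpansion, Finset.sum_eq_single (S.card, 0)]
  · rfl
  · rintro ⟨k, j⟩ hp hne
    have hj : 1 ≤ j := by
      rw [HasAntidiagonal.mem_antidiagonal] at hp
      by_contra! h
      exact hne (by ext <;> simp <;> omega)
    rw [hS.contractedProd_eq_zero hj, mul_zero]
  · exact fun h => absurd (HasAntidiagonal.mem_antidiagonal.2 (add_zero _)) h

lemma IsSignedReflectionStable.Dop_radial {d : ℕ} {S : Finset (E d)}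
    (hS : IsSignedReflectionStable S) {f : ℕ → ℝ → ℝ}
    (hf : ∀ k t, 0 < t → HasDerivAt (f k) (f (k + 1) t) t) {L : List (E d)}
    (hL : (L : Multiset (E d)) = S.val) {x : E d} (hx : x ≠ 0) :
    Dop L (fun y => f 0 (‖y‖ ^ 2)) x = 2 ^ S.card * f S.card (‖x‖ ^ 2) * piP S x := by
  have hlen : L.length = S.card := by simpa using congrArg Multiset.card hL
  have htoFinset : L.toFinset = S := by
    ext; rw [List.mem_toFinset, ← Finset.mem_val, ← hL, Multiset.mem_coe]
  rw [Dop_eq_radialExpansion hf (Multiset.coe_nodup.1 (hL ▸ S.nodup)) hx, hlen, htoFinset,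
    hS.radialExpansion_eq]

lemma norm_sq_rpow {F : Type*} [NormedAddCommGroup F] (y : F) (a : ℝ) :
    (‖y‖ ^ 2) ^ a = ‖y‖ ^ (2 * a) := by
  exact_mod_cast (Real.rpow_natCast_mul (norm_nonneg y) 2 a).symm

def rpowDerivs (a : ℝ) (k : ℕ) (t : ℝ) : ℝ := (∏ i ∈ range k, (a - i)) * t ^ (a - k)

lemma hasDerivAt_rpowDerivs (a : ℝ) (k : ℕ) {t : ℝ} (ht : 0 < t) :
    HasDerivAt (rpowDerivs a k) (rpowDerivs a (k + 1) t) t := by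
  have h := (Real.hasDerivAt_rpow_const (p := a - k) (Or.inl ht.ne')).const_mul
    (∏ i ∈ range k, (a - i))
  refine (h : HasDerivAt (rpowDerivs a k) _ t).congr_deriv ?_
  rw [rpowDerivs, Finset.prod_range_succ, Nat.cast_succ, sub_add_eq_sub_sub]
  ring

def logDerivs : ℕ → ℝ → ℝ
  | 0, t => Real.log t
  | k + 1, t => (-1) ^ k * Nat.factorial k * t ^ (-(k + 1 : ℝ))

lemma hasDerivAt_logDerivs (k : ℕ) {t : ℝ} (ht : 0 < t) :
    HasDerivAt (logDerivs k) (logDerivs (k + 1) t) t := by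
  cases k with
  | zero =>
    refine (Real.hasDerivAt_log ht.ne' : HasDerivAt (logDerivs 0) _ t).congr_deriv ?_
    simp [logDerivs, Real.rpow_neg_one]
  | succ k =>
    have h := (Real.hasDerivAt_rpow_const (p := -(k + 1 : ℝ)) (Or.inl ht.ne')).const_mul
      ((-1) ^ k * Nat.factorial k : ℝ)
    refine (h : HasDerivAt (logDerivs (k + 1)) _ t).congr_deriv ?_
    simp only [logDerivs, Nat.factorial_succ, pow_succ]
    push_cast
    ring_nf

theorem stmt_3_general (d : ℕ) (Sig Sp : Finset (E d))
    (hroot : IsRootSystem Sig) (hpos : IsPositiveSystem Sig Sp)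
    (L : List (E d)) (hL : (L : Multiset (E d)) = Sp.val) :
    (∀ X : E d, X ≠ 0 →
      Dop L (fun Y => ‖Y‖ ^ (-(d : ℝ))) X =
        2 ^ Sp.card * (∏ k ∈ Finset.range Sp.card, (-(d : ℝ) / 2 - (k : ℝ))) *
          piP Sp X * ‖X‖ ^ (-(d : ℝ) - 2 * (Sp.card : ℝ))) ∧
    (1 ≤ Sp.card → ∀ X : E d, X ≠ 0 →
      Dop L (fun Y => Real.log ‖Y‖) X =
        (-2 : ℝ) ^ (Sp.card - 1) * (Nat.factorial (Sp.card - 1) : ℝ) *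
          piP Sp X * ‖X‖ ^ (-(2 * (Sp.card : ℝ)))) := by
  have hS := IsPositiveSystem.isSignedReflectionStable hroot hpos
  refine ⟨fun X hX => ?_, fun hγ X hX => ?_⟩
  · have h := hS.Dop_radial (fun k _ => hasDerivAt_rpowDerivs (-(d : ℝ) / 2) k) hL hX
    simp only [rpowDerivs, Finset.prod_range_zero, one_mul, CharP.cast_eq_zero, sub_zero,
      norm_sq_rpow] at h
    rw [show 2 * (-(d : ℝ) / 2) = -d by ring,
      show 2 * (-(d : ℝ) / 2 - Sp.card) = -d - 2 * Sp.card by ring] at h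
    rw [h]
    ring
  · have h := hS.Dop_radial (f := fun k t => logDerivs k t / 2)
      (fun k _ ht => (hasDerivAt_logDerivs k ht).div_const 2) hL hX
    obtain ⟨m, hm⟩ := Nat.exists_eq_add_of_le' hγ
    rw [show (fun Y : E d => Real.log ‖Y‖) = fun Y => logDerivs 0 (‖Y‖ ^ 2) / 2 by
      ext Y; simp [logDerivs, Real.log_pow], h, hm]
    simp only [logDerivs, norm_sq_rpow, Nat.add_sub_cancel, neg_pow (2 : ℝ)]
    rw [pow_succ]
    push_cast
    ring_nf

/-- With `∂(π)` the composition (in any fixed order) of the directional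
derivatives along the `γ` positive roots:
(a) `∂(π)(|·|^{-d})(X) = 2^γ (∏_{k<γ} (-d/2 - k)) π(X) |X|^{-d-2γ}` for `X ≠ 0`;
(b) if `γ ≥ 1`, `∂(π)(log |·|)(X) = (-2)^{γ-1} (γ-1)! π(X) |X|^{-2γ}` for `X ≠ 0`. -/
theorem stmt_3 (d : ℕ) (hd : 1 ≤ d) (Sig Sp : Finset (E d))
    (hroot : IsRootSystem Sig) (hpos : IsPositiveSystem Sig Sp)
    (L : List (E d)) (hL : (L : Multiset (E d)) = Sp.val) :
    (∀ X : E d, X ≠ 0 →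
      Dop L (fun Y => ‖Y‖ ^ (-(d : ℝ))) X =
        2 ^ Sp.card * (∏ k ∈ Finset.range Sp.card, (-(d : ℝ) / 2 - (k : ℝ))) *
          piP Sp X * ‖X‖ ^ (-(d : ℝ) - 2 * (Sp.card : ℝ))) ∧
    (1 ≤ Sp.card → ∀ X : E d, X ≠ 0 →
      Dop L (fun Y => Real.log ‖Y‖) X =
        (-2 : ℝ) ^ (Sp.card - 1) * (Nat.factorial (Sp.card - 1) : ℝ) *
          piP Sp X * ‖X‖ ^ (-(2 * (Sp.card : ℝ)))) :=
  stmt_3_general d Sig Sp hroot hpos L hL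
end
end

section
/- Let n ≥ 1 and let λ, y ∈ ℝⁿ have non-increasing coordinates: λ₁ ≥ λ₂ ≥ … ≥ λₙ and y₁ ≥ y₂ ≥ … ≥ yₙ. Suppose the block of λ₁ in λ has length j₀ ≥ 1 (λ_{j₀} = λ₁ and, if j₀ < n, λ_{j₀+1} < λ₁) and the block of y₁ in y has length i₀ ≥ 1 (y_{i₀} = y₁ and, if i₀ < n, y_{i₀+1} < y₁). Let w ∈ Sₙ (a permutation of {1,…,n}) be such that w(i) > i₀ for every i ≤ j₀ (i.e. min w⁻¹({1,…,i₀}) > j₀). Then ∑_{i=1}^n λᵢ y_{w(i)} < ∑_{i=1}^n λᵢ yᵢ. -/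
/-!
By the equality case of the rearrangement inequality, permuting `y` strictly lowers
`∑ λᵢ yᵢ` as soon as `λ` and `y ∘ w` are not similarly ordered. Here `k = w⁻¹(1)` is such an
inversion against the first position: `y (w k) = y₁` is maximal, so `k` lies outside the first
`λ`-block and `λ_k < λ₁`, while `y (w 1) < y₁` because `w 1` lies outside the first `y`-block.
-/

theorem Monovary.sum_mul_comp_perm_lt_sum_mul_of_lt {ι α : Type*} [Fintype ι] [Semiring α]
    [LinearOrder α] [IsStrictOrderedRing α] [ExistsAddOfLE α] {f g : ι → α} {σ : Equiv.Perm ι}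
    (hfg : Monovary f g) {i j : ι} (hf : f j < f i) (hg : g (σ i) < g (σ j)) :
    ∑ k, f k * g (σ k) < ∑ k, f k * g k :=
  hfg.sum_mul_comp_perm_lt_sum_mul_iff.2 fun h ↦ (h hg).not_gt hf

theorem stmt_11_general (n : ℕ) (hn : 0 < n) (lam y : Fin n → ℝ)
    (hlam : Antitone lam) (hy : Antitone y)
    (j₀ i₀ : ℕ) (hj₀1 : 1 ≤ j₀)
    (hlamblock' : ∀ i : Fin n, j₀ ≤ (i : ℕ) → lam i < lam ⟨0, hn⟩)
    (hyblock' : ∀ i : Fin n, i₀ ≤ (i : ℕ) → y i < y ⟨0, hn⟩)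
    (w : Equiv.Perm (Fin n))
    (hw : ∀ i : Fin n, (i : ℕ) < j₀ → i₀ ≤ ((w i : Fin n) : ℕ)) :
    ∑ i : Fin n, lam i * y (w i) < ∑ i : Fin n, lam i * y i := by
  set top : Fin n := ⟨0, hn⟩
  have hy_lt : ∀ i : Fin n, (i : ℕ) < j₀ → y (w i) < y top := fun i hi ↦ hyblock' _ (hw i hi)
  have hk : j₀ ≤ (w.symm top : ℕ) := by
    by_contra! h
    simpa using hy_lt _ h
  refine (hlam.monovary hy).sum_mul_comp_perm_lt_sum_mul_of_lt (hlamblock' _ hk) ?_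
  rw [w.apply_symm_apply]
  exact hy_lt top hj₀1

/-- the "max principle" for permutations. If `λ` and `y` have
non-increasing coordinates, the block of the maximal entry of `λ` has length `j₀` (positions
`< j₀`, zero-based, carry the value `λ 0` and positions `≥ j₀` carry strictly smaller values),
the block of the maximal entry of `y` has length `i₀`, and the permutation `w` sends every
position `< j₀` to a position `≥ i₀` (zero-based; i.e. `min w⁻¹({1,…,i₀}) > j₀`, one-based),
then `∑ i, λ i * y (w i) < ∑ i, λ i * y i`. -/
theorem stmt_11 (n : ℕ) (hn : 0 < n) (lam y : Fin n → ℝ)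
    (hlam : Antitone lam) (hy : Antitone y)
    (j₀ i₀ : ℕ) (hj₀1 : 1 ≤ j₀) (hj₀n : j₀ ≤ n) (hi₀1 : 1 ≤ i₀) (hi₀n : i₀ ≤ n)
    (hlamblock : ∀ i : Fin n, (i : ℕ) < j₀ → lam i = lam ⟨0, hn⟩)
    (hlamblock' : ∀ i : Fin n, j₀ ≤ (i : ℕ) → lam i < lam ⟨0, hn⟩)
    (hyblock : ∀ i : Fin n, (i : ℕ) < i₀ → y i = y ⟨0, hn⟩)
    (hyblock' : ∀ i : Fin n, i₀ ≤ (i : ℕ) → y i < y ⟨0, hn⟩)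
    (w : Equiv.Perm (Fin n))
    (hw : ∀ i : Fin n, (i : ℕ) < j₀ → i₀ ≤ ((w i : Fin n) : ℕ)) :
    ∑ i : Fin n, lam i * y (w i) < ∑ i : Fin n, lam i * y i :=
  stmt_11_general n hn lam y hlam hy j₀ i₀ hj₀1 hlamblock' hyblock' w hw
end

section
/- Let n ≥ 1 and let λ, y ∈ ℝⁿ have non-increasing coordinates: λ₁ ≥ … ≥ λₙ and y₁ ≥ … ≥ yₙ. Let Sₙ act on ℝⁿ by (σ·x)ᵢ = x_{σ⁻¹(i)}. Then for every σ ∈ Sₙ, the equality ∑_{i=1}^n λᵢ (σ·y)ᵢ = ∑_{i=1}^n λᵢ yᵢ holds if and only if there exist σ₁, σ₂ ∈ Sₙ with σ₁·λ = λ, σ₂·y = y and σ = σ₁σ₂ (product in Sₙ). That is, the Killing-max property holds for the root system Aₙ₋₁: ⟨λ, σ·y⟩ = ⟨λ, y⟩ iff σ ∈ W_λ · W_y, where W_x denotes the stabilizer of x in Sₙ. -/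
/-!
If `⟨λ, σ·y⟩ = ⟨λ, y⟩`, the equality case of the rearrangement inequality says that `λ` and
`σ·y` are monovarying, so a single permutation `τ` sorts both of them decreasingly. Sorting
does not move the already sorted `λ`, so `τ` stabilises `λ`; and `(σ·y) ∘ τ` is a sorted
rearrangement of `y`, hence equals `y`, so `τ⁻¹σ` stabilises `y`. Conversely, stabilisers of
`λ` and `y` visibly preserve the pairing.
-/

open OrderDual

variable {n : ℕ}

/-- Sorting by the lexicographic key `(g, f)` sorts `g`, and monovariance makes ties in `g`
the only place where `f` could decrease. -/
theorem Monovary.exists_perm_monotone_comp {α β : Type*} [LinearOrder α] [LinearOrder β]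
    {f : Fin n → α} {g : Fin n → β} (hfg : Monovary f g) :
    ∃ τ : Equiv.Perm (Fin n), Monotone (f ∘ τ) ∧ Monotone (g ∘ τ) := by
  set τ := Tuple.sort fun i => toLex (g i, f i)
  have hsorted : ∀ ⦃i j⦄, i ≤ j →
      g (τ i) < g (τ j) ∨ g (τ i) = g (τ j) ∧ f (τ i) ≤ f (τ j) := fun i j hij =>
    Prod.Lex.le_iff.mp (Tuple.monotone_sort (fun i => toLex (g i, f i)) hij)
  refine ⟨τ, fun i j hij => ?_, fun i j hij => ?_⟩
  · rcases hsorted hij with hlt | ⟨_, hle⟩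
    exacts [hfg hlt, hle]
  · rcases hsorted hij with hlt | ⟨heq, _⟩
    exacts [hlt.le, heq.le]

theorem Monovary.exists_perm_antitone_comp {α β : Type*} [LinearOrder α] [LinearOrder β]
    {f : Fin n → α} {g : Fin n → β} (hfg : Monovary f g) :
    ∃ τ : Equiv.Perm (Fin n), Antitone (f ∘ τ) ∧ Antitone (g ∘ τ) := by
  obtain ⟨τ, hf, hg⟩ := hfg.dual.exists_perm_monotone_comp
  exact ⟨τ, monotone_toDual_comp_iff.mp hf, monotone_toDual_comp_iff.mp hg⟩

theorem Antitone.comp_perm_eq_of_antitone {α : Type*} [PartialOrder α] {f : Fin n → α}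
    (hf : Antitone f) {τ : Equiv.Perm (Fin n)} (hfτ : Antitone (f ∘ τ)) : f ∘ τ = f :=
  Tuple.unique_antitone (τ := 1) hfτ hf

theorem sum_mul_comp_inv_mul_eq_sum_mul {ι R : Type*} [Fintype ι] [Mul R] [AddCommMonoid R]
    {f g : ι → R} {σ₁ σ₂ : Equiv.Perm ι} (hf : f ∘ ⇑σ₁⁻¹ = f) (hg : g ∘ ⇑σ₂⁻¹ = g) :
    ∑ i, f i * g ((σ₁ * σ₂)⁻¹ i) = ∑ i, f i * g i := by
  calc ∑ i, f i * g ((σ₁ * σ₂)⁻¹ i)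
      = ∑ i, f (σ₁⁻¹ i) * g (σ₁⁻¹ i) := by
        refine Fintype.sum_congr _ _ fun i => ?_
        rw [mul_inv_rev, Equiv.Perm.mul_apply, ← Function.comp_apply (f := g), hg,
          ← Function.comp_apply (f := f), hf]
    _ = ∑ i, f i * g i := Equiv.sum_comp σ₁⁻¹ fun i => f i * g i

theorem stmt_12_general (n : ℕ) (lam y : Fin n → ℝ)
    (hlam : Antitone lam) (hy : Antitone y) (σ : Equiv.Perm (Fin n)) :
    (∑ i : Fin n, lam i * y (σ⁻¹ i)) = (∑ i : Fin n, lam i * y i) ↔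
      ∃ σ₁ σ₂ : Equiv.Perm (Fin n),
        (fun i => lam (σ₁⁻¹ i)) = lam ∧ (fun i => y (σ₂⁻¹ i)) = y ∧ σ = σ₁ * σ₂ := by
  constructor
  · intro hsum
    have hmono : Monovary lam (y ∘ ⇑σ⁻¹) :=
      ((hlam.monovary hy).sum_mul_comp_perm_eq_sum_mul_iff).mp hsum
    obtain ⟨τ, hlamτ, hyτ⟩ := hmono.exists_perm_antitone_comp
    have hlam_eq : lam ∘ τ = lam := hlam.comp_perm_eq_of_antitone hlamτ
    have hy_eq : y ∘ ⇑(σ⁻¹ * τ) = y := hy.comp_perm_eq_of_antitone hyτ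
    refine ⟨τ, τ⁻¹ * σ, ((Equiv.eq_comp_symm τ lam lam).mpr hlam_eq).symm, ?_, by group⟩
    rwa [mul_inv_rev, inv_inv]
  · rintro ⟨σ₁, σ₂, h₁, h₂, rfl⟩
    exact sum_mul_comp_inv_mul_eq_sum_mul h₁ h₂

/-- Killing-max property for the root system `A_{n-1}`. For `λ, y ∈ ℝⁿ`
with non-increasing coordinates and the action `(σ·x) i = x (σ⁻¹ i)` of the symmetric group,
one has `⟨λ, σ·y⟩ = ⟨λ, y⟩` iff `σ = σ₁ σ₂` with `σ₁·λ = λ` and `σ₂·y = y`. -/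
theorem stmt_12 (n : ℕ) (hn : 1 ≤ n) (lam y : Fin n → ℝ)
    (hlam : Antitone lam) (hy : Antitone y) (σ : Equiv.Perm (Fin n)) :
    (∑ i : Fin n, lam i * y (σ⁻¹ i)) = (∑ i : Fin n, lam i * y i) ↔
      ∃ σ₁ σ₂ : Equiv.Perm (Fin n),
        (fun i => lam (σ₁⁻¹ i)) = lam ∧ (fun i => y (σ₂⁻¹ i)) = y ∧ σ = σ₁ * σ₂ :=
  stmt_12_general n lam y hlam hy σ
end

section
/- Let n ≥ 2 and let G_D ≤ O(ℝⁿ) be the group of even signed permutations: maps g of the form (g x)ᵢ = εᵢ x_{σ⁻¹(i)} with σ ∈ Sₙ, ε ∈ {−1,1}ⁿ and ∏_{i=1}^n εᵢ = 1. Let λ, y ∈ ℝⁿ lie in the closed Weyl chamber of type Dₙ: λ₁ ≥ λ₂ ≥ … ≥ λ_{n−1} ≥ |λₙ| and y₁ ≥ y₂ ≥ … ≥ y_{n−1} ≥ |yₙ|. Suppose λ is not a scalar multiple of (1, 1, …, 1, −1), and suppose the block of λ₁ has length j₀ with 1 ≤ j₀ < n (λ_{j₀} = λ₁ and λ_{j₀+1}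 < λ₁). Let g ∈ G_D be such that (g y)_k ≠ y₁ for every k ≤ j₀ (i.e. either y₁ does not occur as an entry of g y, or its first occurrence is at a position > j₀). Then ⟨λ, g y⟩ < ⟨λ, y⟩. -/
/-!
Summation by parts writes `⟨λ, x⟩` as a combination of the partial sums `x₁ + ⋯ + x_m`
(`m ≤ n - 2`) and of the two functionals `x₁ + ⋯ + x_{n-1} ± xₙ`, with coefficients
`λ_m - λ_{m+1}` and `(λ_{n-1} ± λₙ) / 2`, which are nonnegative on the `Dₙ` chamber. None of
these functionals is larger on `g y` than on `y`: a partial sum of `g y` is bounded by a sum of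
`m` distinct entries of the decreasing sequence `|y|`, and flipping an even (resp. odd) number
of signs of `y` lowers its sum by at least `0` (resp. `2 yₙ`). The first `j₀` entries of `g y`
stay below `y₁`, so the `j₀`-th partial sum drops strictly; its coefficient `λ_{j₀} - λ_{j₀+1}`
is positive, and when `j₀ = n - 1` both coefficients `(λ_{n-1} ± λₙ) / 2` are positive because
`λ` is not a multiple of `(1, …, 1, -1)`.

Vectors on `Fin n` are extended by zero to sequences on `ℕ`; this makes `|y|` antitone on all
of `ℕ`.
-/

open scoped BigOperators

/-- The group of even signed permutations of `ℝⁿ` (the Weyl group of type `Dₙ`): maps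
`x ↦ (ε i * x (σ⁻¹ i)) i` with `σ` a permutation, each `ε i ∈ {−1, 1}` and `∏ i, ε i = 1`. -/
def EvenSignedPerm (n : ℕ) : Set ((Fin n → ℝ) → Fin n → ℝ) :=
  {g | ∃ (σ : Equiv.Perm (Fin n)) (ε : Fin n → ℝ),
    (∀ i, ε i = 1 ∨ ε i = -1) ∧ (∏ i : Fin n, ε i) = 1 ∧
    ∀ (x : Fin n → ℝ) (i : Fin n), g x i = ε i * x (σ⁻¹ i)}

open Finset Function

section Rearrangement

variable {M : Type*} [AddCommMonoid M] [PartialOrder M] [IsOrderedAddMonoid M]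
  {W f : ℕ → M} {P : ℕ → ℕ} {m : ℕ}

theorem sum_le_sum_range_card_of_antitone (hW : Antitone W) (T : Finset ℕ) :
    ∑ t ∈ T, W t ≤ ∑ k ∈ range #T, W k := by
  induction T using Finset.induction_on_max with
  | empty => simp
  | insert a T haT ih =>
    have hTa : #T ≤ a := by
      simpa using card_le_card (fun x hx => mem_range.2 (haT x hx) : T ⊆ range a)
    have haT' : a ∉ T := fun h => (haT a h).false
    rw [sum_insert haT', card_insert_of_notMem haT', sum_range_succ, add_comm]
    exact add_le_add ih (hW hTa)

theorem sum_range_le_sum_range_of_antitone (hW : Antitone W) (hP : Set.InjOn P (range m))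
    (hfP : ∀ k < m, f k ≤ W (P k)) : ∑ k ∈ range m, f k ≤ ∑ k ∈ range m, W k :=
  calc ∑ k ∈ range m, f k ≤ ∑ k ∈ range m, W (P k) :=
        sum_le_sum fun k hk => hfP k (mem_range.1 hk)
    _ = ∑ t ∈ (range m).image P, W t := (sum_image hP).symm
    _ ≤ ∑ k ∈ range m, W k := by
        simpa [card_image_of_injOn hP] using
          sum_le_sum_range_card_of_antitone hW ((range m).image P)

end Rearrangement

theorem sum_range_lt_sum_range_of_antitone {M : Type*} [AddCommMonoid M] [LinearOrder M]
    [IsOrderedCancelAddMonoid M] {W f : ℕ → M} {P : ℕ → ℕ} {m : ℕ} (hW : Antitone W)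
    (hP : Set.InjOn P (range m)) (hm : 0 < m) (hfP : ∀ k < m, f k ≤ W (P k))
    (hf0 : ∀ k < m, f k < W 0) :
    ∑ k ∈ range m, f k < ∑ k ∈ range m, W k := by
  -- capping `W` at `c` keeps `f ≤ W ∘ P` and loses something at index `0`
  set c := (range m).sup' (nonempty_range_iff.2 hm.ne') f
  have hc : c < W 0 := (sup'_lt_iff _).2 fun k hk => hf0 k (mem_range.1 hk)
  calc ∑ k ∈ range m, f k ≤ ∑ k ∈ range m, min (W k) c :=
        sum_range_le_sum_range_of_antitone (hW.min antitone_const) hP fun k hk =>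
          le_min (hfP k hk) (le_sup' f (mem_range.2 hk))
    _ < ∑ k ∈ range m, W k :=
        sum_lt_sum (fun k _ => min_le_left _ _) ⟨0, mem_range.2 hm, min_lt_iff.2 (Or.inr hc)⟩

theorem sum_mul_add_mul_le {ι : Type*} (s : Finset ι) {δ y : ι → ℝ} {c : ℝ}
    (hδ : ∀ t ∈ s, |δ t| ≤ 1) (hy : ∀ t ∈ s, |c| ≤ y t) {a : ℝ} (ha : |a| ≤ 1) :
    ∑ t ∈ s, δ t * y t + a * c ≤ ∑ t ∈ s, y t + a * (∏ t ∈ s, δ t) * c := by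
  classical
  induction s using Finset.induction_on generalizing a with
  | empty => simp
  | insert j s hjs ih =>
    simp only [forall_mem_insert] at hδ hy
    have hac : a * c ≤ y j := calc
      a * c ≤ |a| * |c| := by rw [← abs_mul]; exact le_abs_self _
      _ ≤ 1 * |c| := by gcongr
      _ ≤ y j := by simpa using hy.1
    have hstep : δ j * y j + a * c ≤ y j + δ j * a * c := by
      nlinarith [mul_nonneg (sub_nonneg.2 (abs_le.1 hδ.1).2) (sub_nonneg.2 hac)]
    have hrest := ih hδ.2 hy.2 (a := δ j * a) <| by
      rw [abs_mul]; nlinarith [abs_nonneg a, abs_nonneg (δ j)]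
    rw [sum_insert hjs, sum_insert hjs, prod_insert hjs]
    linarith [show δ j * a * (∏ t ∈ s, δ t) * c = a * (δ j * ∏ t ∈ s, δ t) * c by ring]

theorem sum_mul_comp_le {m : ℕ} {y ε : Fin (m + 1) → ℝ} (σ : Equiv.Perm (Fin (m + 1)))
    (hy : ∀ i : Fin m, |y (Fin.last m)| ≤ y i.castSucc) (hε : ∀ i, |ε i| ≤ 1) :
    ∑ i, ε i * y (σ i) ≤ ∑ i : Fin m, y i.castSucc + (∏ i, ε i) * y (Fin.last m) := by
  rw [← Equiv.sum_comp σ.symm (fun i => ε i * y (σ i)), ← Equiv.prod_comp σ.symm ε]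
  simp only [Equiv.apply_symm_apply, Fin.sum_univ_castSucc, Fin.prod_univ_castSucc]
  have := sum_mul_add_mul_le univ (δ := fun i => ε (σ.symm i.castSucc))
    (y := fun i => y i.castSucc) (fun i _ => hε _) (fun i _ => hy i) (hε (σ.symm (Fin.last m)))
  linarith [mul_comm (ε (σ.symm (Fin.last m))) (∏ i : Fin m, ε (σ.symm i.castSucc))]

theorem sum_range_mul_eq_by_parts (p : ℕ) (L X : ℕ → ℝ) :
    ∑ k ∈ range (p + 2), L k * X k =
      ∑ i ∈ range p, (L i - L (i + 1)) * ∑ k ∈ range (i + 1), X k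
        + (L p + L (p + 1)) / 2 * ∑ k ∈ range (p + 2), X k
        + (L p - L (p + 1)) / 2 * (∑ k ∈ range (p + 1), X k - X (p + 1)) := by
  have hparts := sum_range_by_parts L X (p + 1)
  simp only [smul_eq_mul, add_tsub_cancel_right] at hparts
  have hneg : ∑ i ∈ range p, (L i - L (i + 1)) * ∑ k ∈ range (i + 1), X k =
      -∑ i ∈ range p, (L (i + 1) - L i) * ∑ k ∈ range (i + 1), X k := by
    rw [← sum_neg_distrib]
    exact sum_congr rfl fun _ _ => by ring
  rw [sum_range_succ (fun k => L k * X k), hparts, hneg, sum_range_succ X (p + 1)]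
  ring

/-- The closed Weyl chamber of type `Dₙ`, zero-based: `X 0 ≥ ⋯ ≥ X (n - 2) ≥ |X (n - 1)|`. -/
def IsDChamber (n : ℕ) (X : ℕ → ℝ) : Prop :=
  (∀ i j, i ≤ j → j < n - 1 → X j ≤ X i) ∧ ∀ i < n - 1, |X (n - 1)| ≤ X i

namespace IsDChamber

variable {n : ℕ} {X : ℕ → ℝ}

theorem nonneg (hX : IsDChamber n X) {k : ℕ} (hk : k < n - 1) : 0 ≤ X k :=
  (abs_nonneg _).trans (hX.2 k hk)

theorem antitone_abs (hX : IsDChamber n X) (hX0 : ∀ k, n ≤ k → X k = 0) :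
    Antitone fun k => |X k| := by
  intro i j hij
  dsimp only
  rcases lt_trichotomy j (n - 1) with hj | rfl | hj
  · rw [abs_of_nonneg (hX.nonneg hj), abs_of_nonneg (hX.nonneg (hij.trans_lt hj))]
    exact hX.1 i j hij hj
  · rcases hij.lt_or_eq with hi | rfl
    · exact (hX.2 i hi).trans (le_abs_self _)
    · rfl
  · rw [hX0 j (by omega), abs_zero]
    exact abs_nonneg _

theorem sum_range_abs (hX : IsDChamber n X) {m : ℕ} (hm : m < n) :
    ∑ k ∈ range m, |X k| = ∑ k ∈ range m, X k :=
  sum_congr rfl fun k hk => abs_of_nonneg (hX.nonneg (by have := mem_range.1 hk; omega))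

end IsDChamber

theorem sum_range_mul_lt_of_dominates {p j₀ : ℕ} {L X Y : ℕ → ℝ}
    (hL : IsDChamber (p + 2) L) (hj₀ : 1 ≤ j₀) (hj₀p : j₀ ≤ p + 1) (hLj₀ : |L j₀| < L (j₀ - 1))
    (hS : ∀ m ≤ p, ∑ k ∈ range m, X k ≤ ∑ k ∈ range m, Y k)
    (hSj₀ : ∑ k ∈ range j₀, X k < ∑ k ∈ range j₀, Y k)
    (hplus : ∑ k ∈ range (p + 2), X k ≤ ∑ k ∈ range (p + 2), Y k)
    (hminus : ∑ k ∈ range (p + 1), X k - X (p + 1) ≤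
      ∑ k ∈ range (p + 1), Y k - Y (p + 1)) :
    ∑ k ∈ range (p + 2), L k * X k < ∑ k ∈ range (p + 2), L k * Y k := by
  rw [sum_range_mul_eq_by_parts, sum_range_mul_eq_by_parts]
  have hgap : ∀ i < p, 0 ≤ L i - L (i + 1) := fun i hi =>
    sub_nonneg.2 (hL.1 i (i + 1) (by omega) (by omega))
  have hterms : ∀ i ∈ range p, (L i - L (i + 1)) * ∑ k ∈ range (i + 1), X k ≤
      (L i - L (i + 1)) * ∑ k ∈ range (i + 1), Y k := fun i hi =>
    mul_le_mul_of_nonneg_left (hS (i + 1) (mem_range.1 hi)) (hgap i (mem_range.1 hi))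
  have hLp : |L (p + 1)| ≤ L p := hL.2 p (by omega)
  have ha : 0 ≤ (L p + L (p + 1)) / 2 := by linarith [neg_abs_le (L (p + 1))]
  have hb : 0 ≤ (L p - L (p + 1)) / 2 := by linarith [le_abs_self (L (p + 1))]
  have hplus' := mul_le_mul_of_nonneg_left hplus ha
  have hminus' := mul_le_mul_of_nonneg_left hminus hb
  rcases hj₀p.lt_or_eq with hj₀p | rfl
  · have hsum := sum_lt_sum hterms ⟨j₀ - 1, mem_range.2 (by omega), by
      rw [Nat.sub_add_cancel hj₀]
      exact mul_lt_mul_of_pos_left hSj₀ (by linarith [le_abs_self (L j₀)])⟩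
    linarith
  · rw [Nat.add_sub_cancel] at hLj₀
    have hsum := sum_le_sum hterms
    have ha' : 0 < (L p + L (p + 1)) / 2 := by linarith [neg_abs_le (L (p + 1))]
    have hb' : 0 < (L p - L (p + 1)) / 2 := by linarith [le_abs_self (L (p + 1))]
    rcases hplus.lt_or_eq with hlt | heq
    · linarith [mul_lt_mul_of_pos_left hlt ha']
    · rw [sum_range_succ X (p + 1), sum_range_succ Y (p + 1)] at heq
      have hlt : ∑ k ∈ range (p + 1), X k - X (p + 1) < ∑ k ∈ range (p + 1), Y k - Y (p + 1) := by
        linarith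
      linarith [mul_lt_mul_of_pos_left hlt hb']

theorem extend_val_apply {α : Type*} {n : ℕ} (x : Fin n → α) (e : ℕ → α) {k : ℕ}
    (hk : k < n) : extend Fin.val x e k = x ⟨k, hk⟩ :=
  Fin.val_injective.extend_apply x e ⟨k, hk⟩

theorem extend_val_of_le {α : Type*} {n : ℕ} (x : Fin n → α) (e : ℕ → α) {k : ℕ}
    (hk : n ≤ k) : extend Fin.val x e k = e k :=
  extend_apply' _ _ _ (by rintro ⟨i, rfl⟩; omega)

theorem sum_mul_eq_sum_range_extend {n : ℕ} (x w : Fin n → ℝ) :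
    ∑ i, x i * w i = ∑ k ∈ range n, extend Fin.val x 0 k * extend Fin.val w 0 k := by
  simp [← Fin.sum_univ_eq_sum_range, Fin.val_injective.extend_apply]

theorem sum_range_extend {n : ℕ} (x : Fin n → ℝ) :
    ∑ k ∈ range n, extend Fin.val x 0 k = ∑ i, x i := by
  simp [← Fin.sum_univ_eq_sum_range, Fin.val_injective.extend_apply]

theorem sum_range_extend_castSucc {m : ℕ} (x : Fin (m + 1) → ℝ) :
    ∑ k ∈ range m, extend Fin.val x 0 k = ∑ i : Fin m, x i.castSucc := by
  rw [← Fin.sum_univ_eq_sum_range]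
  exact sum_congr rfl fun i _ => extend_val_apply x 0 (by omega)

theorem isDChamber_extend {n : ℕ} (hn : 0 < n) {x : Fin n → ℝ}
    (hchain : ∀ i j : Fin n, i ≤ j → (j : ℕ) < n - 1 → x j ≤ x i)
    (hlast : ∀ i : Fin n, (i : ℕ) < n - 1 → |x ⟨n - 1, Nat.sub_lt hn one_pos⟩| ≤ x i) :
    IsDChamber n (extend Fin.val x 0) := by
  refine ⟨fun i j hij hj => ?_, fun i hi => ?_⟩
  · rw [extend_val_apply x 0 (by omega : j < n), extend_val_apply x 0 (by omega : i < n)]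
    exact hchain _ _ hij hj
  · rw [extend_val_apply x 0 (by omega : n - 1 < n), extend_val_apply x 0 (by omega : i < n)]
    exact hlast _ hi

theorem IsDChamber.abs_last_le_castSucc {m : ℕ} {y : Fin (m + 1) → ℝ}
    (hy : IsDChamber (m + 1) (extend Fin.val y 0)) (i : Fin m) :
    |y (Fin.last m)| ≤ y i.castSucc := by
  have h := hy.2 i (by simp)
  rwa [Nat.add_sub_cancel, extend_val_apply y 0 (Nat.lt_succ_self m),
    extend_val_apply y 0 (by omega : (i : ℕ) < m + 1)] at h

theorem abs_extend_lt_of_block {n : ℕ} {lam : Fin n → ℝ}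
    (hL : IsDChamber n (extend Fin.val lam 0))
    (hnotmult : ¬ ∃ c : ℝ, lam = fun i : Fin n => if (i : ℕ) = n - 1 then -c else c)
    {j₀ : ℕ} (hj₀1 : 1 ≤ j₀) (hj₀n : j₀ < n)
    (hblock : ∀ i : Fin n, (i : ℕ) < j₀ → lam i = lam ⟨0, Nat.zero_lt_of_lt hj₀n⟩)
    (hblock' : ∀ i : Fin n, j₀ ≤ (i : ℕ) → lam i < lam ⟨0, Nat.zero_lt_of_lt hj₀n⟩) :
    |extend Fin.val lam 0 j₀| < extend Fin.val lam 0 (j₀ - 1) := by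
  have hlt := hblock' ⟨j₀, hj₀n⟩ le_rfl
  rw [extend_val_apply lam 0 hj₀n, extend_val_apply lam 0 (by omega : j₀ - 1 < n),
    hblock ⟨j₀ - 1, by omega⟩ (show j₀ - 1 < j₀ by omega)]
  rcases (by omega : j₀ < n - 1 ∨ j₀ = n - 1) with hj | rfl
  · have hnonneg := hL.nonneg hj
    rw [extend_val_apply lam 0 hj₀n] at hnonneg
    rwa [abs_of_nonneg hnonneg]
  · have hle := hL.2 (n - 2) (by omega)
    rw [extend_val_apply lam 0 hj₀n, extend_val_apply lam 0 (by omega : n - 2 < n),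
      hblock ⟨n - 2, by omega⟩ (show n - 2 < n - 1 by omega)] at hle
    refine abs_lt.2 ⟨lt_of_le_of_ne ?_ fun h => ?_, hlt⟩
    · linarith [neg_abs_le (lam ⟨n - 1, hj₀n⟩)]
    refine hnotmult ⟨lam ⟨0, by omega⟩, funext fun i => ?_⟩
    split_ifs with hi
    · rw [h, show i = ⟨n - 1, hj₀n⟩ from Fin.ext hi]
    · exact hblock i (by omega)

theorem abs_le_one_of_sign {ι : Type*} {ε : ι → ℝ} (hε : ∀ i, ε i = 1 ∨ ε i = -1) (i : ι) :
    |ε i| ≤ 1 := by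
  rcases hε i with h | h <;> simp [h]

namespace EvenSignedPerm

section

variable {n : ℕ} {g : (Fin n → ℝ) → Fin n → ℝ}

theorem exists_injOn_le_abs (hg : g ∈ EvenSignedPerm n) (x : Fin n → ℝ) :
    ∃ P : ℕ → ℕ, Set.InjOn P (range n) ∧
      ∀ k < n, extend Fin.val (g x) 0 k ≤ |extend Fin.val x 0 (P k)| := by
  obtain ⟨σ, ε, hε, -, hgx⟩ := hg
  refine ⟨extend Fin.val (fun i => (σ⁻¹ i : ℕ)) id, fun a ha b hb hab => ?_, fun k hk => ?_⟩
  · rw [coe_range, Set.mem_Iio] at ha hb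
    rw [extend_val_apply _ _ ha, extend_val_apply _ _ hb] at hab
    simpa using σ⁻¹.injective (Fin.ext hab)
  · rw [extend_val_apply (fun i => (σ⁻¹ i : ℕ)) id hk, extend_val_apply x 0 (σ⁻¹ _).isLt,
      extend_val_apply (g x) 0 hk, hgx]
    rcases hε ⟨k, hk⟩ with h | h <;> simp [h, le_abs_self, neg_le_abs]

theorem sum_range_extend_le (hg : g ∈ EvenSignedPerm n) {y : Fin n → ℝ}
    (hy : IsDChamber n (extend Fin.val y 0)) {m : ℕ} (hm : m < n) :
    ∑ k ∈ range m, extend Fin.val (g y) 0 k ≤ ∑ k ∈ range m, extend Fin.val y 0 k := by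
  obtain ⟨P, hP, hgP⟩ := exists_injOn_le_abs hg y
  rw [← hy.sum_range_abs hm]
  exact sum_range_le_sum_range_of_antitone (hy.antitone_abs fun k => extend_val_of_le y 0)
    (hP.mono (by simpa using hm.le)) fun k hk => hgP k (by omega)

theorem sum_range_extend_lt (hg : g ∈ EvenSignedPerm n) {y : Fin n → ℝ}
    (hy : IsDChamber n (extend Fin.val y 0)) {m : ℕ} (hm0 : 0 < m) (hm : m < n)
    (hgy : ∀ k : Fin n, (k : ℕ) < m → g y k ≠ y ⟨0, hm0.trans hm⟩) :
    ∑ k ∈ range m, extend Fin.val (g y) 0 k < ∑ k ∈ range m, extend Fin.val y 0 k := by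
  obtain ⟨P, hP, hgP⟩ := exists_injOn_le_abs hg y
  have hW := hy.antitone_abs fun k => extend_val_of_le y 0
  have hy0 : |extend Fin.val y 0 0| = y ⟨0, by omega⟩ := by
    rw [abs_of_nonneg (hy.nonneg (by omega)), extend_val_apply y 0]
  rw [← hy.sum_range_abs hm]
  refine sum_range_lt_sum_range_of_antitone hW (hP.mono (by simpa using hm.le)) hm0
    (fun k hk => hgP k (by omega)) fun k hk => ?_
  refine lt_of_le_of_ne ((hgP k (by omega)).trans (hW (Nat.zero_le _))) ?_
  rw [hy0, extend_val_apply (g y) 0 (by omega)]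
  exact hgy ⟨k, by omega⟩ hk

end

section

variable {m : ℕ} {g : (Fin (m + 1) → ℝ) → Fin (m + 1) → ℝ}

theorem sum_extend_le (hg : g ∈ EvenSignedPerm (m + 1)) {y : Fin (m + 1) → ℝ}
    (hy : IsDChamber (m + 1) (extend Fin.val y 0)) :
    ∑ k ∈ range (m + 1), extend Fin.val (g y) 0 k ≤
      ∑ k ∈ range (m + 1), extend Fin.val y 0 k := by
  obtain ⟨σ, ε, hε, hprod, hgy⟩ := hg
  have key := sum_mul_comp_le σ⁻¹ hy.abs_last_le_castSucc fun i => abs_le_one_of_sign hε i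
  rw [hprod, one_mul, ← Fin.sum_univ_castSucc y] at key
  rw [sum_range_extend, sum_range_extend]
  simpa only [hgy] using key

theorem sum_range_extend_sub_le (hg : g ∈ EvenSignedPerm (m + 1)) {y : Fin (m + 1) → ℝ}
    (hy : IsDChamber (m + 1) (extend Fin.val y 0)) :
    ∑ k ∈ range m, extend Fin.val (g y) 0 k - extend Fin.val (g y) 0 m ≤
      ∑ k ∈ range m, extend Fin.val y 0 k - extend Fin.val y 0 m := by
  obtain ⟨σ, ε, hε, hprod, hgy⟩ := hg
  set ε' : Fin (m + 1) → ℝ := Fin.lastCases (-ε (Fin.last m)) fun i => ε i.castSucc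
  have hε' : ∀ i, |ε' i| ≤ 1 := Fin.lastCases (by simpa [ε'] using abs_le_one_of_sign hε _)
    fun i => by simpa [ε'] using abs_le_one_of_sign hε _
  have hprod' : ∏ i, ε' i = -1 := by
    rw [Fin.prod_univ_castSucc] at hprod ⊢
    simp only [ε', Fin.lastCases_castSucc, Fin.lastCases_last]
    linarith
  have key := sum_mul_comp_le σ⁻¹ hy.abs_last_le_castSucc hε'
  rw [hprod', Fin.sum_univ_castSucc] at key
  have hlast (x : Fin (m + 1) → ℝ) : extend Fin.val x 0 m = x (Fin.last m) :=
    extend_val_apply x 0 (Nat.lt_succ_self m)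
  rw [sum_range_extend_castSucc, sum_range_extend_castSucc, hlast, hlast]
  simp only [ε', Fin.lastCases_castSucc, Fin.lastCases_last] at key
  simp only [hgy]
  linarith

end

end EvenSignedPerm

/-- the "max principle" for `W(Dₙ)`. Let `λ, y` lie in the closed Weyl
chamber of type `Dₙ` (`λ₁ ≥ … ≥ λ_{n-1} ≥ |λₙ|`), with `λ` not a multiple of
`(1,…,1,−1)` and the block of `λ₁` of length `j₀ < n`. If `g` is an even signed permutation
such that `(g y) k ≠ y₁` for every position `k < j₀` (zero-based), then
`⟨λ, g y⟩ < ⟨λ, y⟩`. -/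
theorem stmt_14 (n : ℕ) (hn : 2 ≤ n) (lam y : Fin n → ℝ)
    (hlamchain : ∀ i j : Fin n, i ≤ j → (j : ℕ) < n - 1 → lam j ≤ lam i)
    (hlamlast : ∀ i : Fin n, (i : ℕ) < n - 1 → |lam ⟨n - 1, by omega⟩| ≤ lam i)
    (hychain : ∀ i j : Fin n, i ≤ j → (j : ℕ) < n - 1 → y j ≤ y i)
    (hylast : ∀ i : Fin n, (i : ℕ) < n - 1 → |y ⟨n - 1, by omega⟩| ≤ y i)
    (hlamnotmult : ¬ ∃ c : ℝ, lam = fun i : Fin n => if (i : ℕ) = n - 1 then -c else c)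
    (j₀ : ℕ) (hj₀1 : 1 ≤ j₀) (hj₀n : j₀ < n)
    (hblock : ∀ i : Fin n, (i : ℕ) < j₀ → lam i = lam ⟨0, by omega⟩)
    (hblock' : ∀ i : Fin n, j₀ ≤ (i : ℕ) → lam i < lam ⟨0, by omega⟩)
    (g : (Fin n → ℝ) → Fin n → ℝ) (hg : g ∈ EvenSignedPerm n)
    (hgy : ∀ k : Fin n, (k : ℕ) < j₀ → g y k ≠ y ⟨0, by omega⟩) :
    (∑ i : Fin n, lam i * g y i) < ∑ i : Fin n, lam i * y i := by
  obtain ⟨p, rfl⟩ : ∃ p, n = p + 2 := ⟨n - 2, by omega⟩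
  have hL := isDChamber_extend (by omega) hlamchain hlamlast
  have hY := isDChamber_extend (by omega) hychain hylast
  rw [sum_mul_eq_sum_range_extend, sum_mul_eq_sum_range_extend]
  exact sum_range_mul_lt_of_dominates hL hj₀1 (by omega)
    (abs_extend_lt_of_block hL hlamnotmult hj₀1 hj₀n hblock hblock')
    (fun m hm => EvenSignedPerm.sum_range_extend_le hg hY (by omega))
    (EvenSignedPerm.sum_range_extend_lt hg hY hj₀1 (by omega) hgy)
    (EvenSignedPerm.sum_extend_le hg hY) (EvenSignedPerm.sum_range_extend_sub_le hg hY)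
end

section
/- In ℝ³ with the standard inner product, let s_α be the orthogonal map (x₁, x₂, x₃) ↦ (x₂, x₁, −x₃) and s_β the orthogonal map (x₁, x₂, x₃) ↦ (x₁, x₃, x₂), and let W ≤ O(ℝ³) be the group generated by s_α and s_β (the Weyl group of type G₂ acting on the plane 𝔞 = {(A, B, A−B) : A, B ∈ ℝ}, which both generators preserve). Let λ, y ∈ {(A, B, A−B) : A ≥ B ≥ A−B ≥ 0} (the closed positive Weyl chamber in 𝔞). Then for every w ∈ W, ⟨λ, w y⟩ = ⟨λ, y⟩ if and only if there exist w₁, w₂ ∈ W with w₁ λ = λ, w₂ y = y and w = w₁ ∘ w₂. (This is the Killing-max property for the root system G₂.) -/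
/-!
Write chamber vectors in the basis of fundamental weights `ω₀ = (2,1,1)`, `ω₁ = (1,1,0)`:
`λ = ∑ aᵢ ωᵢ`, `y = ∑ cⱼ ωⱼ` with `a, c ≥ 0`. Each `w ∈ W` acts by one of twelve integer
matrices `m`, and `⟪λ, y⟫ - ⟪λ, w y⟫ = ∑ aᵢ cⱼ ⟪ωᵢ, ωⱼ - m ωⱼ⟫`, where every pairing
`⟪ωᵢ, ωⱼ - m ωⱼ⟫` is a nonnegative integer. Equality therefore kills each term with a positive
pairing. If `λ` or `y` is `0` the claim is trivial; otherwise each of them vanishes in at most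
one coordinate `i`, the simple reflection `sᵢ` fixes it, and a finite check shows
`m ∈ {1, s_λ} * {1, s_y}`.
-/

open scoped RealInnerProductSpace

namespace G2

open Matrix

abbrev IntMat := Matrix (Fin 3) (Fin 3) ℤ

def sα : IntMat := !![0, 1, 0; 1, 0, 0; 0, 0, -1]

def sβ : IntMat := !![1, 0, 0; 0, 0, 1; 0, 1, 0]

def weylGroup : List IntMat :=
  [1, sα, sβ, sα * sβ, sβ * sα, sα * sβ * sα, sβ * sα * sβ, sα * sβ * sα * sβ,
    sβ * sα * sβ * sα, sα * sβ * sα * sβ * sα, sβ * sα * sβ * sα * sβ, -1]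

-- `(A, B, A - B) = (A - B) • ω₀ + (2B - A) • ω₁`, and `sα` fixes `ω₁`, `sβ` fixes `ω₀`.
def fundWeight : Fin 2 → Fin 3 → ℤ := ![![2, 1, 1], ![1, 1, 0]]

def weightDefect (m : IntMat) (i j : Fin 2) : ℤ :=
  fundWeight i ⬝ᵥ ((1 - m) *ᵥ fundWeight j)

-- `z = some i` encodes a chamber vector on the wall of `sᵢ`, `z = none` a regular one.
def wallReflMat (z : Option (Fin 2)) : IntMat := z.elim 1 ![sα, sβ]

theorem mul_mem_weylGroup : ∀ m₁ ∈ weylGroup, ∀ m₂ ∈ weylGroup, m₁ * m₂ ∈ weylGroup := by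
  decide

theorem exists_inv_mem_weylGroup : ∀ m ∈ weylGroup, ∃ m' ∈ weylGroup, m' * m = 1 := by
  decide

theorem weightDefect_nonneg : ∀ m ∈ weylGroup, ∀ i j, 0 ≤ weightDefect m i j := by
  decide

theorem exists_wallReflMat_factorization : ∀ m ∈ weylGroup, ∀ zl zy : Option (Fin 2),
    (∀ i j, 0 < weightDefect m i j → zl = some i ∨ zy = some j) →
    ∃ m₁ ∈ [1, wallReflMat zl], ∃ m₂ ∈ [1, wallReflMat zy], m = m₁ * m₂ := by
  decide

theorem wallReflMat_mulVec_fundWeight :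
    ∀ i j, i ≠ j → wallReflMat (some i) *ᵥ fundWeight j = fundWeight j := by
  decide

abbrev E3 := EuclideanSpace ℝ (Fin 3)

abbrev toReal : IntMat →+* Matrix (Fin 3) (Fin 3) ℝ := (Int.castRingHom ℝ).mapMatrix

noncomputable def ofWeightCoords (a : Fin 2 → ℝ) : E3 :=
  WithLp.toLp 2 (∑ i, a i • (Int.cast ∘ fundWeight i : Fin 3 → ℝ))

theorem exists_ofWeightCoords {x : E3} (hx : ∃ A B : ℝ, B ≤ A ∧ A - B ≤ B ∧ 0 ≤ A - B ∧
      x 0 = A ∧ x 1 = B ∧ x 2 = A - B) :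
    ∃ a, 0 ≤ a ∧ x = ofWeightCoords a := by
  obtain ⟨A, B, -, hBA, hAB, h₀, h₁, h₂⟩ := hx
  refine ⟨(![A - B, 2 * B - A] : Fin 2 → ℝ), fun i => ?_, ?_⟩
  · fin_cases i <;> simp <;> linarith
  · ext i
    fin_cases i <;> simp [ofWeightCoords, fundWeight, h₀, h₁, h₂] <;> ring

theorem ofWeightCoords_zero : ofWeightCoords 0 = 0 := by
  simp [ofWeightCoords]

theorem toReal_mulVec_cast (m : IntMat) (u : Fin 3 → ℤ) :
    toReal m *ᵥ (Int.cast ∘ u : Fin 3 → ℝ) = Int.cast ∘ (m *ᵥ u) := by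
  ext i
  simpa using (RingHom.map_mulVec (Int.castRingHom ℝ) m u i).symm

def Represents (v : E3 ≃ₗᵢ[ℝ] E3) (m : IntMat) : Prop :=
  ∀ x : E3, (v x).ofLp = toReal m *ᵥ x.ofLp

namespace Represents

variable {v v₁ v₂ : E3 ≃ₗᵢ[ℝ] E3} {m m' m₁ m₂ : IntMat}

theorem one : Represents 1 1 := fun x => by simp

theorem mul (h₁ : Represents v₁ m₁) (h₂ : Represents v₂ m₂) : Represents (v₁ * v₂) (m₁ * m₂) :=
  fun x => by
    rw [map_mul, ← mulVec_mulVec, ← h₂, ← h₁]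
    rfl

theorem inv (h : Represents v m) (hm : m' * m = 1) : Represents v⁻¹ m' := fun x => by
  calc (v⁻¹ x).ofLp = toReal (m' * m) *ᵥ (v⁻¹ x).ofLp := by simp [hm]
    _ = toReal m' *ᵥ x.ofLp := by
      rw [map_mul, ← mulVec_mulVec, ← h]
      congr
      exact v.apply_symm_apply x

theorem injective (h₁ : Represents v₁ m) (h₂ : Represents v₂ m) : v₁ = v₂ :=
  LinearIsometryEquiv.ext fun x => WithLp.ofLp_injective 2 <| (h₁ x).trans (h₂ x).symm

theorem apply_ofWeightCoords_eq_self (h : Represents v m) {a : Fin 2 → ℝ}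
    (hfix : ∀ j, a j ≠ 0 → m *ᵥ fundWeight j = fundWeight j) :
    v (ofWeightCoords a) = ofWeightCoords a := by
  refine WithLp.ofLp_injective 2 ?_
  rw [h, ofWeightCoords, WithLp.ofLp_toLp, mulVec_sum]
  refine Finset.sum_congr rfl fun j _ => ?_
  rcases eq_or_ne (a j) 0 with hj | hj
  · simp [hj]
  · rw [mulVec_smul, toReal_mulVec_cast, hfix j hj]

theorem inner_sub_inner_apply (h : Represents v m) (a c : Fin 2 → ℝ) :
    ⟪ofWeightCoords a, ofWeightCoords c⟫ - ⟪ofWeightCoords a, v (ofWeightCoords c)⟫ =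
      ∑ i, ∑ j, a i * c j * weightDefect m i j := by
  rw [EuclideanSpace.inner_eq_star_dotProduct, EuclideanSpace.inner_eq_star_dotProduct, h]
  simp [ofWeightCoords, weightDefect, dotProduct, mulVec, Fin.sum_univ_succ, fundWeight, sub_mul]
  ring

theorem eq_zero_or_eq_zero_of_inner_eq (h : Represents v m) (hm : m ∈ weylGroup)
    {a c : Fin 2 → ℝ} (ha : 0 ≤ a) (hc : 0 ≤ c)
    (heq : ⟪ofWeightCoords a, v (ofWeightCoords c)⟫ = ⟪ofWeightCoords a, ofWeightCoords c⟫)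
    {i j : Fin 2} (hpos : 0 < weightDefect m i j) : a i = 0 ∨ c j = 0 := by
  have hterm : ∀ i j, 0 ≤ a i * c j * weightDefect m i j := fun i j =>
    mul_nonneg (mul_nonneg (ha i) (hc j)) (Int.cast_nonneg (weightDefect_nonneg m hm i j))
  have hsum := h.inner_sub_inner_apply a c
  rw [heq, sub_self, eq_comm, Finset.sum_eq_zero_iff_of_nonneg
    fun i _ => Finset.sum_nonneg fun j _ => hterm i j] at hsum
  have hij := (Finset.sum_eq_zero_iff_of_nonneg fun j _ => hterm i j).1
    (hsum i (Finset.mem_univ _)) j (Finset.mem_univ _)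
  simpa [hpos.ne'] using hij

end Represents

theorem exists_wall_of_ne_zero {a : Fin 2 → ℝ} (ha : a ≠ 0) :
    ∃ z : Option (Fin 2), ∀ i, a i = 0 ↔ z = some i := by
  by_cases h₀ : a 0 = 0
  · have h₁ : a 1 ≠ 0 := fun h₁ => ha (funext (Fin.forall_fin_two.2 ⟨h₀, h₁⟩))
    exact ⟨some 0, Fin.forall_fin_two.2 ⟨by simp [h₀], by simp [h₁]⟩⟩
  by_cases h₁ : a 1 = 0
  · exact ⟨some 1, Fin.forall_fin_two.2 ⟨by simp [h₀], by simp [h₁]⟩⟩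
  · exact ⟨none, Fin.forall_fin_two.2 ⟨by simp [h₀], by simp [h₁]⟩⟩

section Generators

variable {sa sb : E3 ≃ₗᵢ[ℝ] E3}
  (hsa : ∀ x : E3, (sa x) 0 = x 1 ∧ (sa x) 1 = x 0 ∧ (sa x) 2 = -x 2)
  (hsb : ∀ x : E3, (sb x) 0 = x 0 ∧ (sb x) 1 = x 2 ∧ (sb x) 2 = x 1)

include hsa in
theorem represents_sα : Represents sa sα := fun x => by
  obtain ⟨h₀, h₁, h₂⟩ := hsa x
  ext i
  fin_cases i <;> simp [sα, mulVec, dotProduct, Fin.sum_univ_three, h₀, h₁, h₂]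

include hsb in
theorem represents_sβ : Represents sb sβ := fun x => by
  obtain ⟨h₀, h₁, h₂⟩ := hsb x
  ext i
  fin_cases i <;> simp [sβ, mulVec, dotProduct, Fin.sum_univ_three, h₀, h₁, h₂]

include hsa hsb in
theorem exists_represents_of_mem_closure {w : E3 ≃ₗᵢ[ℝ] E3}
    (hw : w ∈ Subgroup.closure {sa, sb}) : ∃ m ∈ weylGroup, Represents w m := by
  induction hw using Subgroup.closure_induction with
  | mem v hv =>
    rcases hv with rfl | rfl
    · exact ⟨sα, by decide, represents_sα hsa⟩
    · exact ⟨sβ, by decide, represents_sβ hsb⟩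
  | one => exact ⟨1, by decide, Represents.one⟩
  | mul v₁ v₂ _ _ ih₁ ih₂ =>
    obtain ⟨m₁, hm₁, h₁⟩ := ih₁
    obtain ⟨m₂, hm₂, h₂⟩ := ih₂
    exact ⟨m₁ * m₂, mul_mem_weylGroup m₁ hm₁ m₂ hm₂, h₁.mul h₂⟩
  | inv v _ ih =>
    obtain ⟨m, hm, h⟩ := ih
    obtain ⟨m', hm', hinv⟩ := exists_inv_mem_weylGroup m hm
    exact ⟨m', hm', h.inv hinv⟩

variable (sa sb) in
noncomputable def wallRefl (z : Option (Fin 2)) : E3 ≃ₗᵢ[ℝ] E3 := z.elim 1 ![sa, sb]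

theorem wallRefl_mem_closure (z : Option (Fin 2)) :
    wallRefl sa sb z ∈ Subgroup.closure {sa, sb} := by
  rcases z with _ | i
  · exact Subgroup.one_mem _
  · fin_cases i
    · exact Subgroup.subset_closure (Set.mem_insert _ _)
    · exact Subgroup.subset_closure (Set.mem_insert_of_mem _ rfl)

include hsa hsb in
theorem represents_wallRefl (z : Option (Fin 2)) :
    Represents (wallRefl sa sb z) (wallReflMat z) := by
  rcases z with _ | i
  · exact Represents.one
  · fin_cases i
    · exact represents_sα hsa
    · exact represents_sβ hsb

include hsa hsb in
theorem exists_mem_closure_fixing {z : Option (Fin 2)} {a : Fin 2 → ℝ}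
    (hz : ∀ i, z = some i → a i = 0) {m₁ : IntMat} (hm₁ : m₁ ∈ [1, wallReflMat z]) :
    ∃ w₁ ∈ Subgroup.closure {sa, sb}, Represents w₁ m₁ ∧
      w₁ (ofWeightCoords a) = ofWeightCoords a := by
  simp only [List.mem_cons, List.not_mem_nil, or_false] at hm₁
  rcases hm₁ with rfl | rfl
  · exact ⟨1, Subgroup.one_mem _, Represents.one, rfl⟩
  have hrep := represents_wallRefl hsa hsb z
  refine ⟨wallRefl sa sb z, wallRefl_mem_closure z, hrep,
    hrep.apply_ofWeightCoords_eq_self fun j hj => ?_⟩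
  rcases z with _ | i
  · exact one_mulVec _
  · exact wallReflMat_mulVec_fundWeight i j fun hij => hj (hij ▸ hz i rfl)

end Generators

end G2

open G2

/-- Killing-max property for the root system `G₂`. In `ℝ³`, let `sa` be the
orthogonal map `(x₁,x₂,x₃) ↦ (x₂,x₁,−x₃)` and `sb` the orthogonal map
`(x₁,x₂,x₃) ↦ (x₁,x₃,x₂)`, and let `W` be the subgroup of the orthogonal group generated by
`sa` and `sb` (realizing the Weyl group of `G₂` on the plane `{(A,B,A−B)}`). For `λ, y` in
the closed positive Weyl chamber `{(A,B,A−B) : A ≥ B ≥ A−B ≥ 0}` and any `w ∈ W`,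
`⟪λ, w y⟫ = ⟪λ, y⟫` iff `w = w₁ ∘ w₂` with `w₁, w₂ ∈ W`, `w₁ λ = λ` and `w₂ y = y`. -/
theorem stmt_17
    (sa sb : EuclideanSpace ℝ (Fin 3) ≃ₗᵢ[ℝ] EuclideanSpace ℝ (Fin 3))
    (hsa : ∀ x : EuclideanSpace ℝ (Fin 3),
      (sa x) 0 = x 1 ∧ (sa x) 1 = x 0 ∧ (sa x) 2 = -x 2)
    (hsb : ∀ x : EuclideanSpace ℝ (Fin 3),
      (sb x) 0 = x 0 ∧ (sb x) 1 = x 2 ∧ (sb x) 2 = x 1)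
    (lam y : EuclideanSpace ℝ (Fin 3))
    (hlam : ∃ A B : ℝ, B ≤ A ∧ A - B ≤ B ∧ 0 ≤ A - B ∧
      lam 0 = A ∧ lam 1 = B ∧ lam 2 = A - B)
    (hy : ∃ A B : ℝ, B ≤ A ∧ A - B ≤ B ∧ 0 ≤ A - B ∧
      y 0 = A ∧ y 1 = B ∧ y 2 = A - B)
    (w : EuclideanSpace ℝ (Fin 3) ≃ₗᵢ[ℝ] EuclideanSpace ℝ (Fin 3))
    (hw : w ∈ Subgroup.closure {sa, sb}) :
    ⟪lam, w y⟫ = ⟪lam, y⟫ ↔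
      ∃ w₁ ∈ Subgroup.closure {sa, sb}, ∃ w₂ ∈ Subgroup.closure {sa, sb},
        w₁ lam = lam ∧ w₂ y = y ∧ w = w₁ * w₂ := by
  obtain ⟨m, hmW, hwm⟩ := exists_represents_of_mem_closure hsa hsb hw
  obtain ⟨a, ha, rfl⟩ := exists_ofWeightCoords hlam
  obtain ⟨c, hc, rfl⟩ := exists_ofWeightCoords hy
  constructor
  · intro heq
    rcases eq_or_ne a 0 with rfl | ha0
    · exact ⟨w, hw, 1, Subgroup.one_mem _, by simp [ofWeightCoords_zero], rfl, (mul_one w).symm⟩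
    rcases eq_or_ne c 0 with rfl | hc0
    · exact ⟨1, Subgroup.one_mem _, w, hw, rfl, by simp [ofWeightCoords_zero], (one_mul w).symm⟩
    obtain ⟨zl, hzl⟩ := exists_wall_of_ne_zero ha0
    obtain ⟨zy, hzy⟩ := exists_wall_of_ne_zero hc0
    obtain ⟨m₁, hm₁, m₂, hm₂, rfl⟩ :=
      exists_wallReflMat_factorization m hmW zl zy fun i j hpos =>
        (hwm.eq_zero_or_eq_zero_of_inner_eq hmW ha hc heq hpos).imp (hzl i).1 (hzy j).1
    obtain ⟨w₁, hw₁, hrep₁, hfix₁⟩ := exists_mem_closure_fixing hsa hsb (fun i => (hzl i).2) hm₁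
    obtain ⟨w₂, hw₂, hrep₂, hfix₂⟩ := exists_mem_closure_fixing hsa hsb (fun i => (hzy i).2) hm₂
    exact ⟨w₁, hw₁, w₂, hw₂, hfix₁, hfix₂, hwm.injective (hrep₁.mul hrep₂)⟩
  · rintro ⟨w₁, -, w₂, -, hfix₁, hfix₂, rfl⟩
    rw [LinearIsometryEquiv.coe_mul, Function.comp_apply, hfix₂]
    conv_lhs => rw [← hfix₁]
    exact w₁.inner_map_map _ _
end
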